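/- arXiv:2502.15474 — 6 statements merged into one kernel-verified Lean document; each statement's English description precedes it below -/
import Mathlib

section
/- Let d ≥ 1, T > 0, let p : (0,∞) → ℝ be smooth, and let Q : (0,∞) → ℝ be smooth with Q′(s) = s·p′(s) for all s > 0. Let ρ : (0,T)×ℝ^d → ℝ be smooth and strictly positive, let u : (0,T)×ℝ^d → ℝ^d be smooth, and set w := u + ∇_x(p∘ρ). Assume the continuity equation ∂_t ρ + Σ_i ∂_{x_i}(ρ u_i) = 0 holds on (0,T)×ℝ^d. Then the momentum equation ∂_t(ρ w_j) + Σ_i ∂_{x_i}(ρ u_i w_j) = 0 holds for all j = 1,…,d if and only if for all j = 1,…,d: ∂_t(ρ u_j) + Σ_i ∂_{x_i}(ρ u_i u_j) = ∂_{x_j}( ρ² p′(ρ) Σ_i ∂_{x_i}u_i ) + Σ_i ( ∂_{x_i}(Q∘ρ) · ∂_{x_j}u_i − ∂_{x_j}(Q∘ρ) · ∂_{x_i}u_i ). -/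
/-- Time partial derivative `∂_t f (t,x)`. -/
noncomputable def pt {d : ℕ} (f : ℝ → (Fin d → ℝ) → ℝ) (t : ℝ) (x : Fin d → ℝ) : ℝ :=
  deriv (fun s => f s x) t

/-- Spatial partial derivative `∂_{x_i} f (t,x)`. -/
noncomputable def px {d : ℕ} (f : ℝ → (Fin d → ℝ) → ℝ) (i : Fin d) (t : ℝ)
    (x : Fin d → ℝ) : ℝ :=
  fderiv ℝ (f t) x (Pi.single i 1)

open Set Filter

section helpers

lemma px_eq_fderiv {d : ℕ} (f : ℝ → (Fin d → ℝ) → ℝ) (F : ℝ × (Fin d → ℝ) → ℝ)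
    (t : ℝ) (x : Fin d → ℝ) (i : Fin d)
    (hF : DifferentiableAt ℝ F (t, x))
    (heq : ∀ y, f t y = F (t, y)) :
    px f i t x = fderiv ℝ F (t, x) ((0 : ℝ), Pi.single i 1) := by
  have h1 : HasFDerivAt (fun y : Fin d → ℝ => ((t : ℝ), y))
      (((0 : (Fin d → ℝ) →L[ℝ] ℝ)).prod (ContinuousLinearMap.id ℝ (Fin d → ℝ))) x :=
    HasFDerivAt.prodMk (hasFDerivAt_const t x) (hasFDerivAt_id x)
  have h2 := hF.hasFDerivAt.comp x h1
  have h3 : f t = fun y => F (t, y) := funext heq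
  have h4 := h2.fderiv
  simp only [Function.comp_def] at h4
  rw [px, h3, h4]
  simp

lemma pt_eq_fderiv {d : ℕ} (f : ℝ → (Fin d → ℝ) → ℝ) (F : ℝ × (Fin d → ℝ) → ℝ)
    (t : ℝ) (x : Fin d → ℝ)
    (hF : DifferentiableAt ℝ F (t, x))
    (heq : ∀ᶠ s in nhds t, f s x = F (s, x)) :
    pt f t x = fderiv ℝ F (t, x) ((1 : ℝ), (0 : Fin d → ℝ)) := by
  have h1 : HasDerivAt (fun s : ℝ => (s, x)) ((1 : ℝ), (0 : Fin d → ℝ)) t :=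
    HasDerivAt.prodMk (hasDerivAt_id t) (hasDerivAt_const t x)
  have h2 : HasDerivAt (fun s => F (s, x)) (fderiv ℝ F (t, x) (1, 0)) t :=
    hF.hasFDerivAt.comp_hasDerivAt t h1
  rw [pt, Filter.EventuallyEq.deriv_eq (heq : (fun s => f s x) =ᶠ[nhds t] fun s => F (s, x)),
    h2.deriv]

lemma fderiv_comp_scalar {E : Type*} [NormedAddCommGroup E] [NormedSpace ℝ E]
    (G : ℝ → ℝ) (R : E → ℝ) (q : E) (v : E)
    (hG : DifferentiableAt ℝ G (R q)) (hR : DifferentiableAt ℝ R q) :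
    fderiv ℝ (fun q' => G (R q')) q v = deriv G (R q) * fderiv ℝ R q v := by
  have h4 := (hG.hasDerivAt.comp_hasFDerivAt q hR.hasFDerivAt).fderiv
  simp only [Function.comp_def] at h4
  rw [h4]
  simp [smul_eq_mul]

lemma fderiv_mul_apply {E : Type*} [NormedAddCommGroup E] [NormedSpace ℝ E]
    (F G : E → ℝ) (q : E) (v : E)
    (hF : DifferentiableAt ℝ F q) (hG : DifferentiableAt ℝ G q) :
    fderiv ℝ (fun q' => F q' * G q') q v
      = fderiv ℝ F q v * G q + F q * fderiv ℝ G q v := by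
  rw [fderiv_fun_mul hF hG]
  simp [smul_eq_mul]
  ring

lemma fderiv_fderiv_diff {E : Type*} [NormedAddCommGroup E] [NormedSpace ℝ E]
    (F : E → ℝ) (S : Set E) (hS : IsOpen S) (hF : ContDiffOn ℝ (⊤ : ℕ∞) F S)
    (q : E) (hq : q ∈ S) (v : E) :
    DifferentiableAt ℝ (fun q' => fderiv ℝ F q' v) q := by
  have hF' : ContDiffOn ℝ (⊤ : ℕ∞) (fderiv ℝ F) S := hF.fderiv_of_isOpen hS (by simp)
  have hd : DifferentiableAt ℝ (fderiv ℝ F) q :=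
    (hF'.differentiableOn (by simp)).differentiableAt (hS.mem_nhds hq)
  exact hd.clm_apply (differentiableAt_const v)

lemma fderiv_fderiv_symm {E : Type*} [NormedAddCommGroup E] [NormedSpace ℝ E]
    (F : E → ℝ) (S : Set E) (hS : IsOpen S) (hF : ContDiffOn ℝ (⊤ : ℕ∞) F S)
    (q : E) (hq : q ∈ S) (v w : E) :
    fderiv ℝ (fun q' => fderiv ℝ F q' v) q w
      = fderiv ℝ (fun q' => fderiv ℝ F q' w) q v := by
  have hF' : ContDiffOn ℝ (⊤ : ℕ∞) (fderiv ℝ F) S := hF.fderiv_of_isOpen hS (by simp)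
  have hd : DifferentiableAt ℝ (fderiv ℝ F) q :=
    (hF'.differentiableOn (by simp)).differentiableAt (hS.mem_nhds hq)
  have heval : ∀ a b : E, fderiv ℝ (fun q' => fderiv ℝ F q' a) q b
      = fderiv ℝ (fderiv ℝ F) q b a := by
    intro a b
    rw [fderiv_clm_apply hd (differentiableAt_const a)]
    simp
  have hev : ∀ᶠ y in nhds q, HasFDerivAt F (fderiv ℝ F y) y := by
    filter_upwards [hS.mem_nhds hq] with y hy using
      ((hF.differentiableOn (by simp)).differentiableAt (hS.mem_nhds hy)).hasFDerivAt
  rw [heval v w, heval w v]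
  exact second_derivative_symmetric_of_eventually hev hd.hasFDerivAt w v

lemma px_eq_fderiv' {d : ℕ} (f : ℝ → (Fin d → ℝ) → ℝ) (F : ℝ × (Fin d → ℝ) → ℝ)
    (q : ℝ × (Fin d → ℝ)) (i : Fin d)
    (hF : DifferentiableAt ℝ F q)
    (heq : ∀ y, f q.1 y = F (q.1, y)) :
    px f i q.1 q.2 = fderiv ℝ F q ((0 : ℝ), Pi.single i 1) := by
  obtain ⟨t, x⟩ := q
  exact px_eq_fderiv f F t x i hF heq

lemma pt_eq_fderiv' {d : ℕ} (f : ℝ → (Fin d → ℝ) → ℝ) (F : ℝ × (Fin d → ℝ) → ℝ)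
    (q : ℝ × (Fin d → ℝ))
    (hF : DifferentiableAt ℝ F q)
    (heq : ∀ᶠ s in nhds q.1, f s q.2 = F (s, q.2)) :
    pt f q.1 q.2 = fderiv ℝ F q ((1 : ℝ), (0 : Fin d → ℝ)) := by
  obtain ⟨t, x⟩ := q
  exact pt_eq_fderiv f F t x hF heq

end helpers

lemma key
    (d : ℕ) (T : ℝ)
    (p Q : ℝ → ℝ)
    (hp : ContDiffOn ℝ (⊤ : ℕ∞) p (Set.Ioi 0)) (hQ : ContDiffOn ℝ (⊤ : ℕ∞) Q (Set.Ioi 0))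
    (hQp : ∀ s > (0:ℝ), deriv Q s = s * deriv p s)
    (ρ : ℝ → (Fin d → ℝ) → ℝ) (u w : ℝ → (Fin d → ℝ) → Fin d → ℝ)
    (hρ : ContDiff ℝ (⊤ : ℕ∞) fun q : ℝ × (Fin d → ℝ) => ρ q.1 q.2)
    (hρpos : ∀ t ∈ Set.Ioo (0:ℝ) T, ∀ x, 0 < ρ t x)
    (hu : ContDiff ℝ (⊤ : ℕ∞) fun q : ℝ × (Fin d → ℝ) => u q.1 q.2)
    (hw : ∀ (t : ℝ) (x : Fin d → ℝ) (j : Fin d),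
      w t x j = u t x j + px (fun s y => p (ρ s y)) j t x)
    (hcont : ∀ t ∈ Set.Ioo (0:ℝ) T, ∀ x,
      pt ρ t x + ∑ i, px (fun s y => ρ s y * u s y i) i t x = 0)
    (t : ℝ) (ht : t ∈ Set.Ioo (0:ℝ) T) (x : Fin d → ℝ) (j : Fin d) :
    pt (fun s y => ρ s y * w s y j) t x
      + ∑ i, px (fun s y => ρ s y * u s y i * w s y j) i t x
    = (pt (fun s y => ρ s y * u s y j) t x
       + ∑ i, px (fun s y => ρ s y * u s y i * u s y j) i t x)
      - (px (fun s y =>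
             (ρ s y) ^ 2 * deriv p (ρ s y) * ∑ i, px (fun a b => u a b i) i s y) j t x
         + ∑ i, (px (fun s y => Q (ρ s y)) i t x * px (fun s y => u s y i) j t x
                 - px (fun s y => Q (ρ s y)) j t x * px (fun s y => u s y i) i t x)) := by
  classical
  set S : Set (ℝ × (Fin d → ℝ)) := Set.Ioo (0:ℝ) T ×ˢ Set.univ with hSdef
  have hS : IsOpen S := isOpen_Ioo.prod isOpen_univ
  set R : ℝ × (Fin d → ℝ) → ℝ := fun q => ρ q.1 q.2 with hRdef
  set U : Fin d → (ℝ × (Fin d → ℝ)) → ℝ := fun i q => u q.1 q.2 i with hUdef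
  set QR : (ℝ × (Fin d → ℝ)) → ℝ := fun q => Q (R q) with hQRdef
  set PR : (ℝ × (Fin d → ℝ)) → ℝ := fun q => p (R q) with hPRdef
  set vT : ℝ × (Fin d → ℝ) := ((1:ℝ), (0 : Fin d → ℝ)) with hvT
  set vx : Fin d → ℝ × (Fin d → ℝ) := fun i => ((0:ℝ), Pi.single i 1) with hvx
  set W : (ℝ × (Fin d → ℝ)) → (ℝ × (Fin d → ℝ)) → ℝ := fun v q => fderiv ℝ QR q v with hWdef
  set K : (ℝ × (Fin d → ℝ)) → ℝ :=
    fun q => R q ^ 2 * deriv p (R q) * ∑ i, fderiv ℝ (U i) q (vx i) with hKdef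
  -- memberships
  have hmem : ∀ q : ℝ × (Fin d → ℝ), q ∈ S → 0 < R q := fun q hq => hρpos q.1 hq.1 q.2
  have hq0 : ((t, x) : ℝ × (Fin d → ℝ)) ∈ S := ⟨ht, Set.mem_univ x⟩
  -- differentiability
  have hRd : ∀ q, DifferentiableAt ℝ R q := fun q => hρ.differentiable (by simp) q
  have hUc : ∀ i, ContDiff ℝ (⊤ : ℕ∞) (U i) := fun i => contDiff_pi.mp hu i
  have hUd : ∀ i q, DifferentiableAt ℝ (U i) q := fun i q => (hUc i).differentiable (by simp) q
  have hQRc : ContDiffOn ℝ (⊤ : ℕ∞) QR S := hQ.comp hρ.contDiffOn fun q hq => hmem q hq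
  have hPRc : ContDiffOn ℝ (⊤ : ℕ∞) PR S := hp.comp hρ.contDiffOn fun q hq => hmem q hq
  have hQRd : ∀ q ∈ S, DifferentiableAt ℝ QR q := fun q hq =>
    (hQRc.differentiableOn (by simp)).differentiableAt (hS.mem_nhds hq)
  have hPRd : ∀ q ∈ S, DifferentiableAt ℝ PR q := fun q hq =>
    (hPRc.differentiableOn (by simp)).differentiableAt (hS.mem_nhds hq)
  have hQd : ∀ q ∈ S, DifferentiableAt ℝ Q (R q) := fun q hq =>
    (hQ.differentiableOn (by simp)).differentiableAt (Ioi_mem_nhds (hmem q hq))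
  have hpd : ∀ q ∈ S, DifferentiableAt ℝ p (R q) := fun q hq =>
    (hp.differentiableOn (by simp)).differentiableAt (Ioi_mem_nhds (hmem q hq))
  have hWd : ∀ v, ∀ q ∈ S, DifferentiableAt ℝ (W v) q := fun v q hq =>
    fderiv_fderiv_diff QR S hS hQRc q hq v
  have hWsymm : ∀ q ∈ S, ∀ a b, fderiv ℝ (W a) q b = fderiv ℝ (W b) q a := fun q hq a b =>
    fderiv_fderiv_symm QR S hS hQRc q hq a b
  -- chain rules
  have hchainQ : ∀ q ∈ S, ∀ v, fderiv ℝ QR q v = R q * deriv p (R q) * fderiv ℝ R q v := by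
    intro q hq v
    have h := fderiv_comp_scalar Q R q v (hQd q hq) (hRd q)
    rw [hQp (R q) (hmem q hq)] at h
    exact h
  have hchainP : ∀ q ∈ S, ∀ v, fderiv ℝ PR q v = deriv p (R q) * fderiv ℝ R q v := by
    intro q hq v
    exact fderiv_comp_scalar p R q v (hpd q hq) (hRd q)
  -- the function w in joint form
  have hρw : ∀ q ∈ S, ∀ k, R q * w q.1 q.2 k = R q * U k q + W (vx k) q := by
    intro q hq k
    have h1 : px (fun s y => p (ρ s y)) k q.1 q.2 = fderiv ℝ PR q (vx k) :=
      px_eq_fderiv' (fun s y => p (ρ s y)) PR q k (hPRd q hq) (fun y => rfl)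
    have h2 : W (vx k) q = R q * deriv p (R q) * fderiv ℝ R q (vx k) := hchainQ q hq (vx k)
    have h3 : w q.1 q.2 k = U k q + deriv p (R q) * fderiv ℝ R q (vx k) := by
      rw [hw q.1 q.2 k, h1, hchainP q hq (vx k)]
    rw [h3, h2]
    ring
  -- continuity equation in joint form
  have hcontJ : ∀ q ∈ S, fderiv ℝ R q vT
      + ∑ i, (fderiv ℝ R q (vx i) * U i q + R q * fderiv ℝ (U i) q (vx i)) = 0 := by
    intro q hq
    have h0 := hcont q.1 hq.1 q.2
    have h1 : pt ρ q.1 q.2 = fderiv ℝ R q vT :=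
      pt_eq_fderiv' ρ R q (hRd q) (Filter.Eventually.of_forall fun s => rfl)
    have h2 : ∀ i, px (fun s y => ρ s y * u s y i) i q.1 q.2
        = fderiv ℝ R q (vx i) * U i q + R q * fderiv ℝ (U i) q (vx i) := by
      intro i
      rw [px_eq_fderiv' (fun s y => ρ s y * u s y i) (fun q' => R q' * U i q') q i
        ((hRd q).mul (hUd i q)) (fun y => rfl)]
      exact fderiv_mul_apply R (U i) q (vx i) (hRd q) (hUd i q)
    rw [h1, funext h2] at h0
    exact h0
  -- the time-derivative of Q∘ρ in terms of spatial quantities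
  have hWt : ∀ q ∈ S, W vT q = -(∑ i, U i q * W (vx i) q) - K q := by
    intro q hq
    have hDt : fderiv ℝ R q vT
        = -∑ i, (fderiv ℝ R q (vx i) * U i q + R q * fderiv ℝ (U i) q (vx i)) := by
      have := hcontJ q hq; linarith
    have hWi : ∀ i, U i q * W (vx i) q
        = R q * deriv p (R q) * (fderiv ℝ R q (vx i) * U i q) := by
      intro i
      have : W (vx i) q = R q * deriv p (R q) * fderiv ℝ R q (vx i) := hchainQ q hq (vx i)
      rw [this]; ring
    have hWT : W vT q = R q * deriv p (R q) * fderiv ℝ R q vT := hchainQ q hq vT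
    have hK : K q = R q ^ 2 * deriv p (R q) * ∑ i, fderiv ℝ (U i) q (vx i) := rfl
    rw [hWT, hDt, funext hWi, hK, ← Finset.mul_sum, Finset.sum_add_distrib, ← Finset.mul_sum]
    ring
  -- differentiability of the viscous flux K
  have hKd : ∀ q ∈ S, DifferentiableAt ℝ K q := by
    intro q hq
    have h1 : DifferentiableAt ℝ (fun q' => R q' ^ 2) q := (hRd q).pow 2
    have hdp : ContDiffOn ℝ (⊤ : ℕ∞) (deriv p) (Set.Ioi 0) := hp.deriv_of_isOpen isOpen_Ioi (by simp)
    have h2 : DifferentiableAt ℝ (fun q' => deriv p (R q')) q :=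
      ((hdp.differentiableOn (by simp)).differentiableAt (Ioi_mem_nhds (hmem q hq))).comp q (hRd q)
    have h3 : DifferentiableAt ℝ (fun q' => ∑ i, fderiv ℝ (U i) q' (vx i)) q := by
      apply DifferentiableAt.fun_sum
      intro i _
      exact (((hUc i).fderiv_right (m := (⊤ : ℕ∞)) (by simp)).differentiable (by simp) q).clm_apply
        (differentiableAt_const (vx i))
    exact (h1.mul h2).mul h3
  -- bridge lemmas at the point (t, x)
  have hWjd : DifferentiableAt ℝ (W (vx j)) (t, x) := hWd (vx j) _ hq0
  have hB1 : pt (fun s y => ρ s y * w s y j) t x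
      = fderiv ℝ (fun q => R q * U j q) (t, x) vT + fderiv ℝ (W (vx j)) (t, x) vT := by
    have hdiff : DifferentiableAt ℝ (fun q => R q * U j q + W (vx j) q) (t, x) :=
      ((hRd _).mul (hUd j _)).add hWjd
    have heq : ∀ᶠ s in nhds t, ρ s x * w s x j
        = (fun q => R q * U j q + W (vx j) q) (s, x) := by
      filter_upwards [Ioo_mem_nhds ht.1 ht.2] with s hs
      exact hρw (s, x) ⟨hs, Set.mem_univ x⟩ j
    rw [pt_eq_fderiv (fun s y => ρ s y * w s y j) _ t x hdiff heq,
      fderiv_fun_add (f := fun q => R q * U j q) ((hRd ((t, x) : ℝ × (Fin d → ℝ))).mul (hUd j _)) hWjd]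
    simp only [ContinuousLinearMap.add_apply]
    rfl
  have hB3 : pt (fun s y => ρ s y * u s y j) t x
      = fderiv ℝ (fun q => R q * U j q) (t, x) vT :=
    pt_eq_fderiv _ _ t x ((hRd _).mul (hUd j _)) (Filter.Eventually.of_forall fun s => rfl)
  have hB2 : ∀ i, px (fun s y => ρ s y * u s y i * w s y j) i t x
      = fderiv ℝ (fun q => R q * U i q * U j q) (t, x) (vx i)
        + (fderiv ℝ QR (t, x) (vx j) * fderiv ℝ (U i) (t, x) (vx i)
           + U i (t, x) * fderiv ℝ (W (vx j)) (t, x) (vx i)) := by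
    intro i
    have hdiff1 : DifferentiableAt ℝ (fun q => R q * U i q * U j q) (t, x) :=
      ((hRd _).mul (hUd i _)).mul (hUd j _)
    have hdiff2 : DifferentiableAt ℝ (fun q => U i q * W (vx j) q) (t, x) :=
      (hUd i _).mul hWjd
    have heq : ∀ y, ρ t y * u t y i * w t y j
        = (fun q => R q * U i q * U j q + U i q * W (vx j) q) (t, y) := by
      intro y
      have h := hρw (t, y) ⟨ht, Set.mem_univ y⟩ j
      show R (t, y) * U i (t, y) * w t y j
          = R (t, y) * U i (t, y) * U j (t, y) + U i (t, y) * W (vx j) (t, y)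
      rw [show R (t, y) * U i (t, y) * w t y j
          = U i (t, y) * (R (t, y) * w t y j) by ring, h]
      ring
    rw [px_eq_fderiv (fun s y => ρ s y * u s y i * w s y j) _ t x i (hdiff1.add hdiff2) heq,
      fderiv_add hdiff1 hdiff2]
    simp only [ContinuousLinearMap.add_apply]
    rw [fderiv_mul_apply (U i) (W (vx j)) _ _ (hUd i _) hWjd]
    have hWapp : W (vx j) (t, x) = fderiv ℝ QR (t, x) (vx j) := rfl
    rw [hWapp]
    ring
  have hB4 : ∀ i, px (fun s y => ρ s y * u s y i * u s y j) i t x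
      = fderiv ℝ (fun q => R q * U i q * U j q) (t, x) (vx i) := fun i =>
    px_eq_fderiv _ _ t x i (((hRd _).mul (hUd i _)).mul (hUd j _)) (fun y => rfl)
  have hB5 : px (fun s y =>
        (ρ s y) ^ 2 * deriv p (ρ s y) * ∑ i, px (fun a b => u a b i) i s y) j t x
      = fderiv ℝ K (t, x) (vx j) := by
    apply px_eq_fderiv _ K t x j (hKd _ hq0)
    intro y
    have hpxu : ∀ i, px (fun a b => u a b i) i t y = fderiv ℝ (U i) (t, y) (vx i) := fun i =>
      px_eq_fderiv (fun a b => u a b i) (U i) t y i (hUd i _) (fun _ => rfl)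
    show (ρ t y) ^ 2 * deriv p (ρ t y) * ∑ i, px (fun a b => u a b i) i t y
        = R (t, y) ^ 2 * deriv p (R (t, y)) * ∑ i, fderiv ℝ (U i) (t, y) (vx i)
    rw [funext hpxu]
  have hB6 : ∀ k, px (fun s y => Q (ρ s y)) k t x = fderiv ℝ QR (t, x) (vx k) := fun k =>
    px_eq_fderiv _ QR t x k (hQRd _ hq0) (fun y => rfl)
  have hB7 : ∀ i k, px (fun s y => u s y i) k t x = fderiv ℝ (U i) (t, x) (vx k) :=
    fun i k => px_eq_fderiv _ (U i) t x k (hUd i _) (fun y => rfl)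
  -- the symmetrized time derivative of W
  have hfWT : fderiv ℝ (W (vx j)) (t, x) vT
      = -(∑ i, (fderiv ℝ QR (t, x) (vx i) * fderiv ℝ (U i) (t, x) (vx j)
                + U i (t, x) * fderiv ℝ (W (vx j)) (t, x) (vx i)))
        - fderiv ℝ K (t, x) (vx j) := by
    have h1 : fderiv ℝ (W (vx j)) (t, x) vT = fderiv ℝ (W vT) (t, x) (vx j) :=
      hWsymm _ hq0 (vx j) vT
    have hEq : (W vT) =ᶠ[nhds ((t, x) : ℝ × (Fin d → ℝ))]
        (fun q => -(∑ i, U i q * W (vx i) q) - K q) :=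
      Filter.eventuallyEq_of_mem (hS.mem_nhds hq0) (fun q hq => hWt q hq)
    have hGi : ∀ i : Fin d, DifferentiableAt ℝ (fun q => U i q * W (vx i) q) (t, x) :=
      fun i => (hUd i _).mul (hWd (vx i) _ hq0)
    have hGd : DifferentiableAt ℝ (fun q => ∑ i, U i q * W (vx i) q) (t, x) :=
      DifferentiableAt.fun_sum (fun i _ => hGi i)
    have h3 : ∀ i, fderiv ℝ (fun q => U i q * W (vx i) q) (t, x) (vx j)
        = fderiv ℝ QR (t, x) (vx i) * fderiv ℝ (U i) (t, x) (vx j)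
          + U i (t, x) * fderiv ℝ (W (vx j)) (t, x) (vx i) := by
      intro i
      rw [fderiv_mul_apply (U i) (W (vx i)) _ _ (hUd i _) (hWd (vx i) _ hq0),
        hWsymm _ hq0 (vx i) (vx j)]
      have hWapp : W (vx i) (t, x) = fderiv ℝ QR (t, x) (vx i) := rfl
      rw [hWapp]
      ring
    rw [h1, hEq.fderiv_eq, fderiv_fun_sub (f := fun q => -∑ i, U i q * W (vx i) q) hGd.neg (hKd _ hq0), ContinuousLinearMap.sub_apply,
      fderiv_fun_neg, ContinuousLinearMap.neg_apply, fderiv_fun_sum (fun i _ => hGi i),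
      ContinuousLinearMap.sum_apply, funext h3]
  -- final assembly
  have hB67 : ∀ i, px (fun s y => Q (ρ s y)) i t x * px (fun s y => u s y i) j t x
      - px (fun s y => Q (ρ s y)) j t x * px (fun s y => u s y i) i t x
      = fderiv ℝ QR (t, x) (vx i) * fderiv ℝ (U i) (t, x) (vx j)
        - fderiv ℝ QR (t, x) (vx j) * fderiv ℝ (U i) (t, x) (vx i) := by
    intro i
    rw [hB6 i, hB6 j, hB7 i j, hB7 i i]
  rw [hB1, funext hB2, hB3, funext hB4, hB5, funext hB67, hfWT]
  simp only [Finset.sum_add_distrib, Finset.sum_sub_distrib]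
  ring


/-- Under the continuity equation, the Aw–Rascle momentum equation for `w = u + ∇(p∘ρ)`
is equivalent to the Navier–Stokes-like reformulation in `(ρ,u)` with viscosity `ρ²p'(ρ)`. -/
theorem momentum_iff_navier_stokes_reformulation
    (d : ℕ) (hd : 1 ≤ d) (T : ℝ) (hT : 0 < T)
    (p Q : ℝ → ℝ)
    (hp : ContDiffOn ℝ (⊤ : ℕ∞) p (Set.Ioi 0)) (hQ : ContDiffOn ℝ (⊤ : ℕ∞) Q (Set.Ioi 0))
    (hQp : ∀ s > (0:ℝ), deriv Q s = s * deriv p s)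
    (ρ : ℝ → (Fin d → ℝ) → ℝ) (u w : ℝ → (Fin d → ℝ) → Fin d → ℝ)
    (hρ : ContDiff ℝ (⊤ : ℕ∞) fun q : ℝ × (Fin d → ℝ) => ρ q.1 q.2)
    (hρpos : ∀ t ∈ Set.Ioo (0:ℝ) T, ∀ x, 0 < ρ t x)
    (hu : ContDiff ℝ (⊤ : ℕ∞) fun q : ℝ × (Fin d → ℝ) => u q.1 q.2)
    (hw : ∀ (t : ℝ) (x : Fin d → ℝ) (j : Fin d),
      w t x j = u t x j + px (fun s y => p (ρ s y)) j t x)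
    (hcont : ∀ t ∈ Set.Ioo (0:ℝ) T, ∀ x,
      pt ρ t x + ∑ i, px (fun s y => ρ s y * u s y i) i t x = 0) :
    (∀ t ∈ Set.Ioo (0:ℝ) T, ∀ (x : Fin d → ℝ) (j : Fin d),
        pt (fun s y => ρ s y * w s y j) t x
          + ∑ i, px (fun s y => ρ s y * u s y i * w s y j) i t x = 0)
      ↔ (∀ t ∈ Set.Ioo (0:ℝ) T, ∀ (x : Fin d → ℝ) (j : Fin d),
        pt (fun s y => ρ s y * u s y j) t x
          + ∑ i, px (fun s y => ρ s y * u s y i * u s y j) i t x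
        = px (fun s y =>
              (ρ s y) ^ 2 * deriv p (ρ s y) * ∑ i, px (fun a b => u a b i) i s y) j t x
          + ∑ i, (px (fun s y => Q (ρ s y)) i t x * px (fun s y => u s y i) j t x
                  - px (fun s y => Q (ρ s y)) j t x * px (fun s y => u s y i) i t x)) := by
  constructor
  · intro h t ht x j
    have hk := key d T p Q hp hQ hQp ρ u w hρ hρpos hu hw hcont t ht x j
    have h0 := h t ht x j
    linarith
  · intro h t ht x j
    have hk := key d T p Q hp hQ hQp ρ u w hρ hρpos hu hw hcont t ht x j
    have h0 := h t ht x j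
    linarith
end

section
/- Let T > 0 and let p : (0,∞) → ℝ be smooth. Let ρ : (0,T)×ℝ → ℝ be smooth and strictly positive, let u : (0,T)×ℝ → ℝ be smooth, and set w := u + ∂_x(p∘ρ). Assume the continuity equation ∂_t ρ + ∂_x(ρ u) = 0 holds on (0,T)×ℝ. Then the momentum equation ∂_t(ρ w) + ∂_x(ρ u w) = 0 holds if and only if ∂_t(ρ u) + ∂_x(ρ u²) − ∂_x( ρ² p′(ρ) ∂_x u ) = 0, i.e. the one-dimensional dissipative Aw–Rascle system coincides with the momentum equation of the pressureless compressible Navier–Stokes equations with density-dependent viscosity coefficient μ(ρ) = ρ² p′(ρ). -/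
/-- Time partial derivative `∂_t f (t,x)` for functions of `(t,x) ∈ ℝ × ℝ`. -/
noncomputable def pt1 (f : ℝ → ℝ → ℝ) (t x : ℝ) : ℝ :=
  deriv (fun s => f s x) t

/-- Spatial partial derivative `∂_x f (t,x)` for functions of `(t,x) ∈ ℝ × ℝ`. -/
noncomputable def px1 (f : ℝ → ℝ → ℝ) (t x : ℝ) : ℝ :=
  deriv (fun y => f t y) x

namespace ARaux

/-- directional derivative in the time direction for uncurried functions -/
noncomputable def dT (f : ℝ × ℝ → ℝ) (z : ℝ × ℝ) : ℝ := fderiv ℝ f z (1, 0)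

/-- directional derivative in the space direction for uncurried functions -/
noncomputable def dX (f : ℝ × ℝ → ℝ) (z : ℝ × ℝ) : ℝ := fderiv ℝ f z (0, 1)

lemma sliceT {f : ℝ × ℝ → ℝ} (hf : Differentiable ℝ f) (t x : ℝ) :
    HasDerivAt (fun s => f (s, x)) (dT f (t, x)) t := by
  have h := (hf (t, x)).hasFDerivAt.comp_hasDerivAt t
    ((hasDerivAt_id t).prodMk (hasDerivAt_const t x))
  unfold dT; exact h

lemma sliceX {f : ℝ × ℝ → ℝ} (hf : Differentiable ℝ f) (t x : ℝ) :
    HasDerivAt (fun y => f (t, y)) (dX f (t, x)) x := by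
  have h := (hf (t, x)).hasFDerivAt.comp_hasDerivAt x
    ((hasDerivAt_const x t).prodMk (hasDerivAt_id x))
  unfold dX; exact h

lemma contDiff_dT {f : ℝ × ℝ → ℝ} (hf : ContDiff ℝ (⊤ : ℕ∞) f) : ContDiff ℝ (⊤ : ℕ∞) (dT f) := by
  unfold dT
  exact (hf.fderiv_right (by simp)).clm_apply contDiff_const

lemma contDiff_dX {f : ℝ × ℝ → ℝ} (hf : ContDiff ℝ (⊤ : ℕ∞) f) : ContDiff ℝ (⊤ : ℕ∞) (dX f) := by
  unfold dX
  exact (hf.fderiv_right (by simp)).clm_apply contDiff_const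

lemma clairaut {f : ℝ × ℝ → ℝ} (hf : ContDiff ℝ (⊤ : ℕ∞) f) (z : ℝ × ℝ) :
    dT (dX f) z = dX (dT f) z := by
  have hd : Differentiable ℝ f := hf.differentiable (by simp)
  have hd2 : DifferentiableAt ℝ (fderiv ℝ f) z :=
    ((hf.fderiv_right (m := (⊤ : ℕ∞)) (by simp)).differentiable (by simp)) z
  have key : ∀ v w : ℝ × ℝ,
      fderiv ℝ (fun y => fderiv ℝ f y w) z v = fderiv ℝ (fderiv ℝ f) z v w := by
    intro v w
    have h : HasFDerivAt (fun y => fderiv ℝ f y w)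
        ((ContinuousLinearMap.apply ℝ ℝ w).comp (fderiv ℝ (fderiv ℝ f) z)) z :=
      (ContinuousLinearMap.apply ℝ ℝ w).hasFDerivAt.comp z hd2.hasFDerivAt
    rw [h.fderiv]
    rfl
  have hsym := second_derivative_symmetric (fun y => (hd y).hasFDerivAt)
      hd2.hasFDerivAt ((1:ℝ), (0:ℝ)) ((0:ℝ), (1:ℝ))
  unfold dT dX
  rw [key ((1:ℝ),(0:ℝ)) ((0:ℝ),(1:ℝ)), key ((0:ℝ),(1:ℝ)) ((1:ℝ),(0:ℝ))]
  exact hsym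

end ARaux

open ARaux Set

/-- In one space dimension, under the continuity equation, the Aw–Rascle momentum
equation for `w = u + ∂_x(p∘ρ)` is equivalent to the momentum equation of the
pressureless compressible Navier–Stokes equations with viscosity `μ(ρ) = ρ²p'(ρ)`. -/
theorem oneD_AR_iff_navier_stokes
    (T : ℝ) (hT : 0 < T)
    (p : ℝ → ℝ) (hp : ContDiffOn ℝ (⊤ : ℕ∞) p (Set.Ioi 0))
    (ρ u w : ℝ → ℝ → ℝ)
    (hρ : ContDiff ℝ (⊤ : ℕ∞) fun q : ℝ × ℝ => ρ q.1 q.2)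
    (hρpos : ∀ t ∈ Set.Ioo (0:ℝ) T, ∀ x, 0 < ρ t x)
    (hu : ContDiff ℝ (⊤ : ℕ∞) fun q : ℝ × ℝ => u q.1 q.2)
    (hw : ∀ t x, w t x = u t x + px1 (fun s y => p (ρ s y)) t x)
    (hcont : ∀ t ∈ Set.Ioo (0:ℝ) T, ∀ x,
      pt1 ρ t x + px1 (fun s y => ρ s y * u s y) t x = 0) :
    (∀ t ∈ Set.Ioo (0:ℝ) T, ∀ x,
        pt1 (fun s y => ρ s y * w s y) t x
          + px1 (fun s y => ρ s y * u s y * w s y) t x = 0)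
      ↔ (∀ t ∈ Set.Ioo (0:ℝ) T, ∀ x,
        pt1 (fun s y => ρ s y * u s y) t x
          + px1 (fun s y => ρ s y * u s y ^ 2) t x
          - px1 (fun s y => (ρ s y) ^ 2 * deriv p (ρ s y) * px1 u s y) t x = 0) := by
  set Rc : ℝ × ℝ → ℝ := fun z => ρ z.1 z.2 with hRcdef
  set Uc : ℝ × ℝ → ℝ := fun z => u z.1 z.2 with hUcdef
  set Mc : ℝ × ℝ → ℝ := fun z => Rc z * Uc z with hMcdef
  have hρ' : ContDiff ℝ (⊤ : ℕ∞) Rc := hρ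
  have hu' : ContDiff ℝ (⊤ : ℕ∞) Uc := hu
  have hM : ContDiff ℝ (⊤ : ℕ∞) Mc := hρ'.mul hu'
  have hRd : Differentiable ℝ Rc := hρ'.differentiable (by simp)
  have hUd : Differentiable ℝ Uc := hu'.differentiable (by simp)
  have hMd : Differentiable ℝ Mc := hM.differentiable (by simp)
  have hdXR : Differentiable ℝ (dX Rc) := (contDiff_dX hρ').differentiable (by simp)
  have hdTR : Differentiable ℝ (dT Rc) := (contDiff_dT hρ').differentiable (by simp)
  have hdXU : Differentiable ℝ (dX Uc) := (contDiff_dX hu').differentiable (by simp)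
  have hdXM : Differentiable ℝ (dX Mc) := (contDiff_dX hM).differentiable (by simp)
  have hp' : ContDiffOn ℝ (⊤ : ℕ∞) (deriv p) (Set.Ioi 0) := hp.deriv_of_isOpen isOpen_Ioi (by simp)
  have hder_p : ∀ r : ℝ, 0 < r → HasDerivAt p (deriv p r) r := fun r hr =>
    ((hp.contDiffAt (isOpen_Ioi.mem_nhds hr)).differentiableAt (by simp)).hasDerivAt
  have hder_p' : ∀ r : ℝ, 0 < r → HasDerivAt (deriv p) (deriv (deriv p) r) r := fun r hr =>
    ((hp'.contDiffAt (isOpen_Ioi.mem_nhds hr)).differentiableAt (by simp)).hasDerivAt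
  -- product rule for `dX Mc`
  have hMx : ∀ z : ℝ × ℝ,
      dX Mc z = dX Rc z * u z.1 z.2 + ρ z.1 z.2 * dX Uc z := by
    rintro ⟨s, y⟩
    have h1 : HasDerivAt (fun y' => ρ s y' * u s y') (dX Mc (s, y)) y := sliceX hMd s y
    have h2 : HasDerivAt (fun y' => ρ s y' * u s y')
        (dX Rc (s, y) * u s y + ρ s y * dX Uc (s, y)) y :=
      (sliceX hRd s y).mul (sliceX hUd s y)
    exact h1.unique h2
  -- continuity equation in `dT/dX` form
  have hC : ∀ s ∈ Set.Ioo (0:ℝ) T, ∀ y, dT Rc (s, y) + dX Mc (s, y) = 0 := by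
    intro s hs y
    have h0 := hcont s hs y
    have hT1 : HasDerivAt (fun s' => ρ s' y) (dT Rc (s, y)) s := sliceT hRd s y
    have hX1 : HasDerivAt (fun y' => ρ s y' * u s y') (dX Mc (s, y)) y := sliceX hMd s y
    have e1 : pt1 ρ s y = dT Rc (s, y) := hT1.deriv
    have e2 : px1 (fun s y => ρ s y * u s y) s y = dX Mc (s, y) := hX1.deriv
    rw [e1, e2] at h0
    exact h0
  -- the formula for `q = ∂_x (p ∘ ρ)` on the strip
  have hQ : ∀ s ∈ Set.Ioo (0:ℝ) T, ∀ y,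
      px1 (fun s' y' => p (ρ s' y')) s y = deriv p (ρ s y) * dX Rc (s, y) := by
    intro s hs y
    have h1 : HasDerivAt (fun y' => ρ s y') (dX Rc (s, y)) y := sliceX hRd s y
    have h2 : HasDerivAt (fun y' => p (ρ s y')) (deriv p (ρ s y) * dX Rc (s, y)) y :=
      (hder_p _ (hρpos s hs y)).comp y h1
    exact h2.deriv
  have hpxu : ∀ s y, px1 u s y = dX Uc (s, y) := by
    intro s y
    have h1 : HasDerivAt (fun y' => u s y') (dX Uc (s, y)) y := sliceX hUd s y
    exact h1.deriv
  -- the key pointwise identity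
  have key : ∀ t ∈ Set.Ioo (0:ℝ) T, ∀ x,
      pt1 (fun s y => ρ s y * w s y) t x + px1 (fun s y => ρ s y * u s y * w s y) t x
        = pt1 (fun s y => ρ s y * u s y) t x + px1 (fun s y => ρ s y * u s y ^ 2) t x
          - px1 (fun s y => (ρ s y) ^ 2 * deriv p (ρ s y) * px1 u s y) t x := by
    intro t ht x
    have hapos : 0 < ρ t x := hρpos t ht x
    -- time direction
    have htR : HasDerivAt (fun s => ρ s x) (dT Rc (t, x)) t := sliceT hRd t x
    have htRx : HasDerivAt (fun s => dX Rc (s, x)) (dT (dX Rc) (t, x)) t := sliceT hdXR t x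
    have htp1 : HasDerivAt (fun s => deriv p (ρ s x))
        (deriv (deriv p) (ρ t x) * dT Rc (t, x)) t :=
      by have := (hder_p' (ρ t x) hapos).comp t htR; exact this
    have htP1 : HasDerivAt (fun s => deriv p (ρ s x) * dX Rc (s, x))
        (deriv (deriv p) (ρ t x) * dT Rc (t, x) * dX Rc (t, x)
          + deriv p (ρ t x) * dT (dX Rc) (t, x)) t := htp1.mul htRx
    have htRQ : HasDerivAt (fun s => ρ s x * px1 (fun s' y' => p (ρ s' y')) s x)
        (dT Rc (t, x) * (deriv p (ρ t x) * dX Rc (t, x))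
          + ρ t x * (deriv (deriv p) (ρ t x) * dT Rc (t, x) * dX Rc (t, x)
              + deriv p (ρ t x) * dT (dX Rc) (t, x))) t := by
      have h1 : HasDerivAt (fun s => ρ s x * (deriv p (ρ s x) * dX Rc (s, x)))
          (dT Rc (t, x) * (deriv p (ρ t x) * dX Rc (t, x))
            + ρ t x * (deriv (deriv p) (ρ t x) * dT Rc (t, x) * dX Rc (t, x)
                + deriv p (ρ t x) * dT (dX Rc) (t, x))) t := htR.mul htP1
      apply h1.congr_of_eventuallyEq
      filter_upwards [Ioo_mem_nhds ht.1 ht.2] with s hs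
      rw [hQ s hs x]
    have htM : HasDerivAt (fun s => ρ s x * u s x) (dT Mc (t, x)) t := sliceT hMd t x
    have hptM : pt1 (fun s y => ρ s y * u s y) t x = dT Mc (t, x) := htM.deriv
    have hptW : pt1 (fun s y => ρ s y * w s y) t x
        = dT Mc (t, x)
          + (dT Rc (t, x) * (deriv p (ρ t x) * dX Rc (t, x))
            + ρ t x * (deriv (deriv p) (ρ t x) * dT Rc (t, x) * dX Rc (t, x)
                + deriv p (ρ t x) * dT (dX Rc) (t, x))) := by
      have h1 := htM.add htRQ
      have h2 : HasDerivAt (fun s => ρ s x * w s x)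
          (dT Mc (t, x)
            + (dT Rc (t, x) * (deriv p (ρ t x) * dX Rc (t, x))
              + ρ t x * (deriv (deriv p) (ρ t x) * dT Rc (t, x) * dX Rc (t, x)
                  + deriv p (ρ t x) * dT (dX Rc) (t, x)))) t := by
        apply h1.congr_of_eventuallyEq
        apply Filter.Eventually.of_forall
        intro s
        show ρ s x * w s x
          = ρ s x * u s x + ρ s x * px1 (fun s' y' => p (ρ s' y')) s x
        rw [hw s x]
        ring
      exact h2.deriv
    -- space direction
    have hxR : HasDerivAt (fun y => ρ t y) (dX Rc (t, x)) x := sliceX hRd t x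
    have hxU : HasDerivAt (fun y => u t y) (dX Uc (t, x)) x := sliceX hUd t x
    have hxRx : HasDerivAt (fun y => dX Rc (t, y)) (dX (dX Rc) (t, x)) x := sliceX hdXR t x
    have hxUx : HasDerivAt (fun y => dX Uc (t, y)) (dX (dX Uc) (t, x)) x := sliceX hdXU t x
    have hxp1 : HasDerivAt (fun y => deriv p (ρ t y))
        (deriv (deriv p) (ρ t x) * dX Rc (t, x)) x :=
      (hder_p' (ρ t x) hapos).comp x hxR
    have hxP1 : HasDerivAt (fun y => deriv p (ρ t y) * dX Rc (t, y))
        (deriv (deriv p) (ρ t x) * dX Rc (t, x) * dX Rc (t, x)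
          + deriv p (ρ t x) * dX (dX Rc) (t, x)) x := hxp1.mul hxRx
    have hxRU : HasDerivAt (fun y => ρ t y * u t y)
        (dX Rc (t, x) * u t x + ρ t x * dX Uc (t, x)) x := hxR.mul hxU
    have hxRUQ : HasDerivAt (fun y => ρ t y * u t y * px1 (fun s' y' => p (ρ s' y')) t y)
        ((dX Rc (t, x) * u t x + ρ t x * dX Uc (t, x)) * (deriv p (ρ t x) * dX Rc (t, x))
          + ρ t x * u t x * (deriv (deriv p) (ρ t x) * dX Rc (t, x) * dX Rc (t, x)
              + deriv p (ρ t x) * dX (dX Rc) (t, x))) x := by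
      have h1 : HasDerivAt (fun y => ρ t y * u t y * (deriv p (ρ t y) * dX Rc (t, y)))
          ((dX Rc (t, x) * u t x + ρ t x * dX Uc (t, x)) * (deriv p (ρ t x) * dX Rc (t, x))
            + ρ t x * u t x * (deriv (deriv p) (ρ t x) * dX Rc (t, x) * dX Rc (t, x)
                + deriv p (ρ t x) * dX (dX Rc) (t, x))) x := hxRU.mul hxP1
      have hfe : (fun y => ρ t y * u t y * px1 (fun s' y' => p (ρ s' y')) t y)
          = fun y => ρ t y * u t y * (deriv p (ρ t y) * dX Rc (t, y)) := by
        funext y; rw [hQ t ht y]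
      rw [hfe]
      exact h1
    have hxRU2 : HasDerivAt (fun y => ρ t y * u t y ^ 2)
        (dX Rc (t, x) * (u t x * u t x)
          + ρ t x * (dX Uc (t, x) * u t x + u t x * dX Uc (t, x))) x := by
      have h1 : HasDerivAt (fun y => ρ t y * (u t y * u t y))
          (dX Rc (t, x) * (u t x * u t x)
            + ρ t x * (dX Uc (t, x) * u t x + u t x * dX Uc (t, x))) x :=
        hxR.mul (hxU.mul hxU)
      have hfe : (fun y => ρ t y * u t y ^ 2) = fun y => ρ t y * (u t y * u t y) := by
        funext y; ring
      rw [hfe]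
      exact h1
    have hpxRU2 : px1 (fun s y => ρ s y * u s y ^ 2) t x
        = dX Rc (t, x) * (u t x * u t x)
          + ρ t x * (dX Uc (t, x) * u t x + u t x * dX Uc (t, x)) := hxRU2.deriv
    have hxV : HasDerivAt (fun y => (ρ t y) ^ 2 * deriv p (ρ t y) * px1 u t y)
        (((dX Rc (t, x) * ρ t x + ρ t x * dX Rc (t, x)) * deriv p (ρ t x)
            + ρ t x * ρ t x * (deriv (deriv p) (ρ t x) * dX Rc (t, x))) * dX Uc (t, x)
          + ρ t x * ρ t x * deriv p (ρ t x) * dX (dX Uc) (t, x)) x := by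
      have h1 : HasDerivAt (fun y => ρ t y * ρ t y * deriv p (ρ t y) * dX Uc (t, y))
          (((dX Rc (t, x) * ρ t x + ρ t x * dX Rc (t, x)) * deriv p (ρ t x)
              + ρ t x * ρ t x * (deriv (deriv p) (ρ t x) * dX Rc (t, x))) * dX Uc (t, x)
            + ρ t x * ρ t x * deriv p (ρ t x) * dX (dX Uc) (t, x)) x :=
        ((hxR.mul hxR).mul hxp1).mul hxUx
      have hfe : (fun y => (ρ t y) ^ 2 * deriv p (ρ t y) * px1 u t y)
          = fun y => ρ t y * ρ t y * deriv p (ρ t y) * dX Uc (t, y) := by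
        funext y; rw [hpxu t y]; ring
      rw [hfe]
      exact h1
    have hpxV : px1 (fun s y => (ρ s y) ^ 2 * deriv p (ρ s y) * px1 u s y) t x
        = ((dX Rc (t, x) * ρ t x + ρ t x * dX Rc (t, x)) * deriv p (ρ t x)
            + ρ t x * ρ t x * (deriv (deriv p) (ρ t x) * dX Rc (t, x))) * dX Uc (t, x)
          + ρ t x * ρ t x * deriv p (ρ t x) * dX (dX Uc) (t, x) := hxV.deriv
    have hpxW : px1 (fun s y => ρ s y * u s y * w s y) t x
        = (dX Rc (t, x) * (u t x * u t x)
            + ρ t x * (dX Uc (t, x) * u t x + u t x * dX Uc (t, x)))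
          + ((dX Rc (t, x) * u t x + ρ t x * dX Uc (t, x)) * (deriv p (ρ t x) * dX Rc (t, x))
            + ρ t x * u t x * (deriv (deriv p) (ρ t x) * dX Rc (t, x) * dX Rc (t, x)
                + deriv p (ρ t x) * dX (dX Rc) (t, x))) := by
      have h1 := hxRU2.add hxRUQ
      have h2 : HasDerivAt (fun y => ρ t y * u t y * w t y)
          ((dX Rc (t, x) * (u t x * u t x)
              + ρ t x * (dX Uc (t, x) * u t x + u t x * dX Uc (t, x)))
            + ((dX Rc (t, x) * u t x + ρ t x * dX Uc (t, x)) * (deriv p (ρ t x) * dX Rc (t, x))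
              + ρ t x * u t x * (deriv (deriv p) (ρ t x) * dX Rc (t, x) * dX Rc (t, x)
                  + deriv p (ρ t x) * dX (dX Rc) (t, x)))) x := by
        apply h1.congr_of_eventuallyEq
        apply Filter.Eventually.of_forall
        intro y
        show ρ t y * u t y * w t y
          = ρ t y * u t y ^ 2 + ρ t y * u t y * px1 (fun s' y' => p (ρ s' y')) t y
        rw [hw t y]
        ring
      exact h2.deriv
    -- continuity equation and its spatial derivative at (t,x)
    have hC0 : dT Rc (t, x) + (dX Rc (t, x) * u t x + ρ t x * dX Uc (t, x)) = 0 := by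
      have h0 := hC t ht x
      rw [hMx (t, x)] at h0
      exact h0
    have hCx : dT (dX Rc) (t, x)
        + (dX (dX Rc) (t, x) * u t x + dX Rc (t, x) * dX Uc (t, x)
          + (dX Rc (t, x) * dX Uc (t, x) + ρ t x * dX (dX Uc) (t, x))) = 0 := by
      have hg : (fun y => dT Rc (t, y) + dX Mc (t, y)) = fun _ => (0:ℝ) :=
        funext fun y => hC t ht y
      have h1 : HasDerivAt (fun y => dT Rc (t, y) + dX Mc (t, y))
          (dX (dT Rc) (t, x) + dX (dX Mc) (t, x)) x :=
        (sliceX hdTR t x).add (sliceX hdXM t x)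
      rw [hg] at h1
      have h2 : dX (dT Rc) (t, x) + dX (dX Mc) (t, x) = 0 :=
        h1.unique (hasDerivAt_const x 0)
      have h3 : HasDerivAt (fun y => dX Mc (t, y)) (dX (dX Mc) (t, x)) x := sliceX hdXM t x
      have h4 : HasDerivAt (fun y => dX Mc (t, y))
          (dX (dX Rc) (t, x) * u t x + dX Rc (t, x) * dX Uc (t, x)
            + (dX Rc (t, x) * dX Uc (t, x) + ρ t x * dX (dX Uc) (t, x))) x := by
        have hfe : (fun y => dX Mc (t, y))
            = fun y => dX Rc (t, y) * u t y + ρ t y * dX Uc (t, y) :=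
          funext fun y => hMx (t, y)
        rw [hfe]
        exact (hxRx.mul hxU).add (hxR.mul hxUx)
      have h5 : dX (dX Mc) (t, x)
          = dX (dX Rc) (t, x) * u t x + dX Rc (t, x) * dX Uc (t, x)
            + (dX Rc (t, x) * dX Uc (t, x) + ρ t x * dX (dX Uc) (t, x)) := h3.unique h4
      have h6 : dT (dX Rc) (t, x) = dX (dT Rc) (t, x) := clairaut hρ' (t, x)
      rw [h6, ← h5]
      exact h2
    rw [hptW, hpxW, hptM, hpxRU2, hpxV]
    linear_combination
      (deriv p (ρ t x) * dX Rc (t, x)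
        + ρ t x * deriv (deriv p) (ρ t x) * dX Rc (t, x)) * hC0
      + (ρ t x * deriv p (ρ t x)) * hCx
  constructor
  · intro h t ht x
    have h1 := key t ht x
    have h2 := h t ht x
    linarith
  · intro h t ht x
    have h1 := key t ht x
    have h2 := h t ht x
    linarith
end

section
/- Let d ≥ 1, T > 0, let p : (0,∞) → ℝ be smooth, and let Q : (0,∞) → ℝ be smooth with Q′(s) = √s · p′(s) for all s > 0. Let ρ : (0,T)×ℝ^d → ℝ be smooth and strictly positive, let u : (0,T)×ℝ^d → ℝ^d be smooth, and set w := u + ∇_x(p∘ρ). Then the momentum equation ∂_t(ρ w_j) + Σ_i ∂_{x_i}(ρ u_i w_j) = 0 holds for all j = 1,…,d on (0,T)×ℝ^d if and only if ∂_t(ρ w_j) + Σ_i ∂_{x_i}(ρ w_i w_j) = Σ_i ∂_{x_i}( ∂_{x_i}(Q∘ρ) · √ρ · w_j ) holds for all j = 1,…,d on (0,T)×ℝ^d. -/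
/-- The Aw–Rascle momentum equation `∂_t(ρwⱼ) + div(ρu wⱼ) = 0`, with `w = u + ∇(p∘ρ)`,
is equivalent to its symmetrized form
`∂_t(ρwⱼ) + div(ρw wⱼ) = div(∇(Q∘ρ) √ρ wⱼ)` where `Q'(s) = √s p'(s)`. -/
theorem momentum_iff_symmetrized
    (d : ℕ) (hd : 1 ≤ d) (T : ℝ) (hT : 0 < T)
    (p Q : ℝ → ℝ)
    (hp : ContDiffOn ℝ (⊤ : ℕ∞) p (Set.Ioi 0)) (hQ : ContDiffOn ℝ (⊤ : ℕ∞) Q (Set.Ioi 0))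
    (hQp : ∀ s > (0:ℝ), deriv Q s = Real.sqrt s * deriv p s)
    (ρ : ℝ → (Fin d → ℝ) → ℝ) (u w : ℝ → (Fin d → ℝ) → Fin d → ℝ)
    (hρ : ContDiff ℝ (⊤ : ℕ∞) fun q : ℝ × (Fin d → ℝ) => ρ q.1 q.2)
    (hρpos : ∀ t ∈ Set.Ioo (0:ℝ) T, ∀ x, 0 < ρ t x)
    (hu : ContDiff ℝ (⊤ : ℕ∞) fun q : ℝ × (Fin d → ℝ) => u q.1 q.2)
    (hw : ∀ (t : ℝ) (x : Fin d → ℝ) (j : Fin d),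
      w t x j = u t x j + px (fun s y => p (ρ s y)) j t x) :
    (∀ t ∈ Set.Ioo (0:ℝ) T, ∀ (x : Fin d → ℝ) (j : Fin d),
        pt (fun s y => ρ s y * w s y j) t x
          + ∑ i, px (fun s y => ρ s y * u s y i * w s y j) i t x = 0)
      ↔ (∀ t ∈ Set.Ioo (0:ℝ) T, ∀ (x : Fin d → ℝ) (j : Fin d),
        pt (fun s y => ρ s y * w s y j) t x
          + ∑ i, px (fun s y => ρ s y * w s y i * w s y j) i t x
        = ∑ i, px (fun s y =>
            px (fun a b => Q (ρ a b)) i s y * Real.sqrt (ρ s y) * w s y j) i t x) := by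
  have key : ∀ t ∈ Set.Ioo (0:ℝ) T, ∀ (x : Fin d → ℝ) (i j : Fin d),
      px (fun s y => ρ s y * w s y i * w s y j) i t x
        = px (fun s y => ρ s y * u s y i * w s y j) i t x
          + px (fun s y =>
              px (fun a b => Q (ρ a b)) i s y * Real.sqrt (ρ s y) * w s y j) i t x := by
    intro t ht x i j
    have hpos : ∀ y, 0 < ρ t y := hρpos t ht
    have hρt : ContDiff ℝ (⊤ : ℕ∞) (ρ t) := hρ.comp (contDiff_const.prodMk contDiff_id)
    have hut : ∀ k : Fin d, ContDiff ℝ (⊤ : ℕ∞) (fun y => u t y k) := by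
      intro k
      exact ((ContinuousLinearMap.proj (R := ℝ) (φ := fun _ : Fin d => ℝ) k).contDiff.comp
        hu).comp (contDiff_const.prodMk contDiff_id)
    have hprt : ContDiff ℝ (⊤ : ℕ∞) (fun y => p (ρ t y)) := by
      rw [← contDiffOn_univ]
      exact hp.comp hρt.contDiffOn (fun y _ => Set.mem_Ioi.mpr (hpos y))
    have hQrt : ContDiff ℝ (⊤ : ℕ∞) (fun y => Q (ρ t y)) := by
      rw [← contDiffOn_univ]
      exact hQ.comp hρt.contDiffOn (fun y _ => Set.mem_Ioi.mpr (hpos y))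
    have hwt : ∀ k : Fin d, ContDiff ℝ (⊤ : ℕ∞) (fun y => w t y k) := by
      intro k
      have hfd : ContDiff ℝ (⊤ : ℕ∞) (fun y => fderiv ℝ (fun z => p (ρ t z)) y (Pi.single k 1)) :=
        (hprt.fderiv_right (by simp)).clm_apply contDiff_const
      have heq : (fun y => w t y k)
          = fun y => u t y k + fderiv ℝ (fun z => p (ρ t z)) y (Pi.single k 1) := by
        funext y; rw [hw t y k]; rfl
      rw [heq]; exact (hut k).add hfd
    -- chain rule identities
    have hchain : ∀ (F : ℝ → ℝ), ContDiffOn ℝ (⊤ : ℕ∞) F (Set.Ioi 0) → ∀ y,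
        fderiv ℝ (fun z => F (ρ t z)) y (Pi.single i 1)
          = deriv F (ρ t y) * fderiv ℝ (ρ t) y (Pi.single i 1) := by
      intro F hF y
      have hFd : DifferentiableAt ℝ F (ρ t y) :=
        ((hF.differentiableOn (by simp)).differentiableAt (isOpen_Ioi.mem_nhds (hpos y)))
      have hρd : HasFDerivAt (ρ t) (fderiv ℝ (ρ t) y) y :=
        (hρt.differentiable (by simp) y).hasFDerivAt
      have h := (hFd.hasDerivAt.comp_hasFDerivAt y hρd).fderiv
      show (fderiv ℝ (F ∘ ρ t) y) (Pi.single i 1) = _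
      rw [h]
      simp [smul_eq_mul]
    -- the pointwise identity
    have hABC : ∀ y, ρ t y * w t y i * w t y j
        = ρ t y * u t y i * w t y j
          + fderiv ℝ (fun b => Q (ρ t b)) y (Pi.single i 1) * Real.sqrt (ρ t y) * w t y j := by
      intro y
      have hwi : w t y i = u t y i + deriv p (ρ t y) * fderiv ℝ (ρ t) y (Pi.single i 1) := by
        rw [hw t y i]
        have := hchain p hp y
        simp only [px]
        rw [this]
      have hQd : fderiv ℝ (fun b => Q (ρ t b)) y (Pi.single i 1)
          = Real.sqrt (ρ t y) * deriv p (ρ t y) * fderiv ℝ (ρ t) y (Pi.single i 1) := by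
        rw [hchain Q hQ y, hQp _ (hpos y)]
      have hsq : Real.sqrt (ρ t y) * Real.sqrt (ρ t y) = ρ t y :=
        Real.mul_self_sqrt (hpos y).le
      rw [hQd, hwi]
      linear_combination
        (-(deriv p (ρ t y) * (fderiv ℝ (ρ t) y) (Pi.single i 1) * w t y j)) * hsq
    -- differentiability of the two summands
    have hdB : DifferentiableAt ℝ (fun y => ρ t y * u t y i * w t y j) x :=
      (((hρt.mul (hut i)).mul (hwt j)).differentiable (by simp)) x
    have hdC : DifferentiableAt ℝ (fun y =>
        fderiv ℝ (fun b => Q (ρ t b)) y (Pi.single i 1) * Real.sqrt (ρ t y) * w t y j) x := by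
      have h1 : ContDiff ℝ (⊤ : ℕ∞) (fun y => fderiv ℝ (fun b => Q (ρ t b)) y (Pi.single i 1)) :=
        (hQrt.fderiv_right (by simp)).clm_apply contDiff_const
      have h2 : DifferentiableAt ℝ (fun y => Real.sqrt (ρ t y)) x := by
        have : ContDiffAt ℝ (⊤ : ℕ∞) Real.sqrt (ρ t x) := Real.contDiffAt_sqrt (ne_of_gt (hpos x))
        exact (this.comp x (hρt.contDiffAt)).differentiableAt (by simp)
      exact ((h1.differentiable (by simp) x).mul h2).mul ((hwt j).differentiable (by simp) x)
    simp only [px]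
    have hA : (fun y => ρ t y * w t y i * w t y j)
        = fun y => ρ t y * u t y i * w t y j
          + fderiv ℝ (fun b => Q (ρ t b)) y (Pi.single i 1) * Real.sqrt (ρ t y) * w t y j := by
      funext y; exact hABC y
    rw [hA, fderiv_fun_add hdB hdC]
    rfl
  constructor
  · intro h t ht x j
    have hs : ∑ i, px (fun s y => ρ s y * w s y i * w s y j) i t x
        = ∑ i, px (fun s y => ρ s y * u s y i * w s y j) i t x
          + ∑ i, px (fun s y =>
              px (fun a b => Q (ρ a b)) i s y * Real.sqrt (ρ s y) * w s y j) i t x := by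
      rw [← Finset.sum_add_distrib]
      exact Finset.sum_congr rfl (fun i _ => key t ht x i j)
    have h0 := h t ht x j
    linarith
  · intro h t ht x j
    have hs : ∑ i, px (fun s y => ρ s y * w s y i * w s y j) i t x
        = ∑ i, px (fun s y => ρ s y * u s y i * w s y j) i t x
          + ∑ i, px (fun s y =>
              px (fun a b => Q (ρ a b)) i s y * Real.sqrt (ρ s y) * w s y j) i t x := by
      rw [← Finset.sum_add_distrib]
      exact Finset.sum_congr rfl (fun i _ => key t ht x i j)
    have h0 := h t ht x j
    linarith
end

section
/- Let d ≥ 1, T > 0, and let K : ℝ^d → ℝ be smooth with K(−x) = K(x) for all x ∈ ℝ^d. Let ρ : [0,T]×ℝ^d → ℝ and u : [0,T]×ℝ^d → ℝ^d be smooth with ρ ≥ 0, and suppose there is R > 0 such that ρ(t,x) = 0 whenever |x| ≥ R, for all t ∈ [0,T]. Define w(t,x) := u(t,x) + ∇_x ∫_{ℝ^d} K(x−y) ρ(t,y) dy. Assume the continuity equation ∂_t ρ + Σ_i ∂_{x_i}(ρ u_i) = 0 holds on (0,T)×ℝ^d. Then the momentum equation ∂_t(ρ w_j) + Σ_i ∂_{x_i}(ρ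 u_i w_j) = 0 holds for all j = 1,…,d on (0,T)×ℝ^d if and only if for all (t,x) ∈ (0,T)×ℝ^d and all j = 1,…,d: ∂_t(ρ u_j)(t,x) + Σ_i ∂_{x_i}(ρ u_i u_j)(t,x) − ρ(t,x) ∫_{ℝ^d} Σ_i ( u_i(t,y) − u_i(t,x) ) ∂²_{x_i x_j}K(x−y) ρ(t,y) dy = 0. -/
open MeasureTheory

namespace NonlocalARAux

variable {d : ℕ}

/-- Integral of a partial derivative of a compactly supported smooth function vanishes. -/
lemma integral_pderiv_eq_zero (hd : 1 ≤ d) (f : (Fin d → ℝ) → ℝ)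
    (hf : ContDiff ℝ (⊤ : ℕ∞) f) (hcf : HasCompactSupport f) (i : Fin d) :
    ∫ x, fderiv ℝ f x (Pi.single i 1) = 0 := by
  obtain ⟨n, rfl⟩ : ∃ n, d = n + 1 := ⟨d - 1, (Nat.succ_pred_eq_of_pos hd).symm⟩
  obtain ⟨r, hr⟩ := hcf.isCompact.isBounded.subset_closedBall 0
  set M : ℝ := max r 0 + 1 with hM
  have hMr : r < M := lt_of_le_of_lt (le_max_left r 0) (lt_add_one _)
  have hM0 : 0 < M := lt_of_le_of_lt (le_max_right r 0) (lt_add_one _)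
  have hzero : ∀ y : Fin (n+1) → ℝ, M ≤ ‖y‖ → f y = 0 := by
    intro y hy
    apply image_eq_zero_of_notMem_tsupport
    intro hmem
    have := hr hmem
    rw [Metric.mem_closedBall, dist_zero_right] at this
    linarith
  have hfd : Differentiable ℝ f := hf.differentiable (by simp)
  set a : Fin (n+1) → ℝ := fun _ => -M with ha
  set b : Fin (n+1) → ℝ := fun _ => M with hb
  have hle : a ≤ b := fun k => by simp only [ha, hb]; linarith
  set F : Fin (n+1) → (Fin (n+1) → ℝ) → ℝ := fun k => if k = i then f else 0 with hF
  set F' : Fin (n+1) → (Fin (n+1) → ℝ) → (Fin (n+1) → ℝ) →L[ℝ] ℝ :=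
    fun k => if k = i then fderiv ℝ f else 0 with hF'
  have key := MeasureTheory.integral_divergence_of_hasFDerivAt_off_countable' a b hle
    F F' ∅ Set.countable_empty
    (fun k => by
      by_cases h : k = i
      · simp only [hF, h, if_pos rfl]; exact hf.continuous.continuousOn
      · simp only [hF, h, if_neg h]; exact continuousOn_const)
    (fun x _ k => by
      by_cases h : k = i
      · simpa only [hF, hF', h, if_pos rfl] using (hfd x).hasFDerivAt
      · simp only [hF, hF', h, if_neg h]; exact hasFDerivAt_const (0:ℝ) x)
    (by
      have hcont : Continuous fun x : Fin (n+1) → ℝ => ∑ k, F' k x (Pi.single k 1) := by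
        apply continuous_finset_sum
        intro k _
        by_cases h : k = i
        · simp only [hF', h, if_pos rfl]
          exact (hf.continuous_fderiv (by simp)).clm_apply continuous_const
        · simp only [hF', h, if_neg h]
          exact continuous_const
      exact hcont.continuousOn.integrableOn_compact isCompact_Icc)
  -- the face integrals vanish
  have hface : ∀ (k : Fin (n+1)) (c : ℝ), M ≤ |c| →
      ∀ x : Fin n → ℝ, F k (Fin.insertNth k c x) = 0 := by
    intro k c hc x
    by_cases h : k = i
    · subst h
      simp only [hF, if_pos rfl]
      apply hzero
      calc M ≤ |c| := hc
        _ ≤ ‖(Fin.insertNth k c x : Fin (n+1) → ℝ)‖ := by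
              have h := norm_le_pi_norm (Fin.insertNth k c x : Fin (n+1) → ℝ) k
              rwa [Fin.insertNth_apply_same, Real.norm_eq_abs] at h
    · simp [hF, h]
  have hrhs : (∑ k : Fin (n+1),
      ((∫ x in Set.Icc (a ∘ k.succAbove) (b ∘ k.succAbove), F k (Fin.insertNth k (b k) x)) -
        ∫ x in Set.Icc (a ∘ k.succAbove) (b ∘ k.succAbove), F k (Fin.insertNth k (a k) x))) = 0 := by
    apply Finset.sum_eq_zero
    intro k _
    have h1 : ∀ x : Fin n → ℝ, F k (Fin.insertNth k (b k) x) = 0 := fun x =>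
      hface k (b k) (by rw [hb, abs_of_pos hM0]) x
    have h2 : ∀ x : Fin n → ℝ, F k (Fin.insertNth k (a k) x) = 0 := fun x =>
      hface k (a k) (by rw [ha]; simp [abs_of_neg (neg_lt_zero.mpr hM0)]) x
    simp [h1, h2]
  rw [hrhs] at key
  -- the divergence is `fderiv f x (e i)`
  have hdiv : (fun x : Fin (n+1) → ℝ => ∑ k, F' k x (Pi.single k 1))
      = fun x => fderiv ℝ f x (Pi.single i 1) := by
    funext x
    rw [Finset.sum_eq_single i]
    · simp [hF']
    · intro k _ hk; simp [hF', hk]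
    · intro h; exact absurd (Finset.mem_univ i) h
  rw [hdiv] at key
  -- extend the integral from the box to the whole space
  have hsubIcc : tsupport f ⊆ Set.Icc a b := by
    intro x hmem
    have hball := hr hmem
    rw [Metric.mem_closedBall, dist_zero_right] at hball
    have habs : ∀ k, |x k| ≤ r := fun k => by
      have := norm_le_pi_norm x k
      rw [Real.norm_eq_abs] at this
      linarith
    constructor <;> intro k <;> have := abs_le.1 (habs k)
    · simp only [ha]; linarith [this.1]
    · simp only [hb]; linarith [this.2]
  have hout : ∀ x : Fin (n+1) → ℝ, x ∉ Set.Icc a b → fderiv ℝ f x (Pi.single i 1) = 0 := by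
    intro x hx
    have h0 : fderiv ℝ f x = 0 := by
      by_contra h
      exact hx (hsubIcc (support_fderiv_subset ℝ (Function.mem_support.mpr h)))
    simp [h0]
  rw [MeasureTheory.setIntegral_eq_integral_of_forall_compl_eq_zero hout] at key
  exact key

end NonlocalARAux

open scoped Convolution

namespace NonlocalARAux

variable {d : ℕ}

/-- Integration by parts: move one derivative from `h` to `G`. -/
lemma ibp (hd : 1 ≤ d) (G h : (Fin d → ℝ) → ℝ) (hG : ContDiff ℝ (⊤ : ℕ∞) G)
    (hh : ContDiff ℝ (⊤ : ℕ∞) h) (hch : HasCompactSupport h) (x : Fin d → ℝ) (i : Fin d) :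
    ∫ y, G (x - y) * fderiv ℝ h y (Pi.single i 1)
      = ∫ y, fderiv ℝ G (x - y) (Pi.single i 1) * h y := by
  set F : (Fin d → ℝ) → ℝ := fun y => G (x - y) * h y with hFdef
  have hGc : ContDiff ℝ (⊤ : ℕ∞) fun y : Fin d → ℝ => G (x - y) :=
    hG.comp (contDiff_const.sub contDiff_id)
  have hFc : ContDiff ℝ (⊤ : ℕ∞) F := hGc.mul hh
  have hFs : HasCompactSupport F := hch.mul_left
  have hder : ∀ y, fderiv ℝ F y (Pi.single i 1)
      = G (x - y) * fderiv ℝ h y (Pi.single i 1)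
        - fderiv ℝ G (x - y) (Pi.single i 1) * h y := by
    intro y
    have h1 : HasFDerivAt (fun y : Fin d → ℝ => x - y)
        (-(ContinuousLinearMap.id ℝ (Fin d → ℝ))) y := (hasFDerivAt_id y).const_sub x
    have h2 : HasFDerivAt (fun y : Fin d → ℝ => G (x - y))
        ((fderiv ℝ G (x - y)).comp (-(ContinuousLinearMap.id ℝ (Fin d → ℝ)))) y :=
      ((hG.differentiable (by simp) (x - y)).hasFDerivAt).comp y h1
    have h3 : HasFDerivAt h (fderiv ℝ h y) y := (hh.differentiable (by simp) y).hasFDerivAt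
    have h4 := h2.mul h3
    rw [show F = (fun y : Fin d → ℝ => G (x - y)) * h from rfl, h4.fderiv]
    simp only [ContinuousLinearMap.add_apply, ContinuousLinearMap.smul_apply,
      ContinuousLinearMap.comp_apply, ContinuousLinearMap.neg_apply,
      ContinuousLinearMap.id_apply, map_neg, smul_eq_mul]
    ring
  have hA : Integrable (fun y => G (x - y) * fderiv ℝ h y (Pi.single i 1)) := by
    apply Continuous.integrable_of_hasCompactSupport
    · exact (hGc.continuous).mul ((hh.continuous_fderiv (by simp)).clm_apply continuous_const)
    · exact HasCompactSupport.mul_left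
        ((hch.fderiv ℝ).comp_left (g := fun L : (Fin d → ℝ) →L[ℝ] ℝ => L (Pi.single i 1)) rfl)
  have hB : Integrable (fun y => fderiv ℝ G (x - y) (Pi.single i 1) * h y) := by
    apply Continuous.integrable_of_hasCompactSupport
    · exact (((hG.continuous_fderiv (by simp)).comp
        (continuous_const.sub continuous_id)).clm_apply continuous_const).mul hh.continuous
    · exact hch.mul_left
  have hz := integral_pderiv_eq_zero hd F hFc hFs i
  have e1 : (fun y => G (x - y) * fderiv ℝ h y (Pi.single i 1)
      - fderiv ℝ G (x - y) (Pi.single i 1) * h y)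
      = fun y => fderiv ℝ F y (Pi.single i 1) := funext fun y => (hder y).symm
  have hz' : ∫ y, (G (x - y) * fderiv ℝ h y (Pi.single i 1)
      - fderiv ℝ G (x - y) (Pi.single i 1) * h y) = 0 := by rw [e1]; exact hz
  rw [integral_sub hA hB] at hz'
  linarith

/-- Differentiation of a convolution-type integral in the space variable. -/
lemma conv_hasFDerivAt (G h : (Fin d → ℝ) → ℝ) (hG : ContDiff ℝ (⊤ : ℕ∞) G)
    (hh : ContDiff ℝ (⊤ : ℕ∞) h) (hch : HasCompactSupport h) (x : Fin d → ℝ) :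
    ∃ D : (Fin d → ℝ) →L[ℝ] ℝ, HasFDerivAt (fun y => ∫ z, G (y - z) * h z) D x ∧
      ∀ v, D v = ∫ z, G (x - z) * fderiv ℝ h z v := by
  set L := ContinuousLinearMap.mul ℝ ℝ with hL
  have hGloc : LocallyIntegrable G (volume : Measure (Fin d → ℝ)) :=
    hG.continuous.locallyIntegrable
  have heq : (fun y => ∫ z, G (y - z) * h z) = (G ⋆[L, volume] h) := by
    funext y
    have h1 := MeasureTheory.integral_sub_left_eq_self
      (fun z => G (y - z) * h z) volume y
    simp only [sub_sub_cancel] at h1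
    rw [convolution_def, ← h1]
    simp only [hL, ContinuousLinearMap.mul_apply']
  have hconv := hch.hasFDerivAt_convolution_right L hGloc (hh.of_le (by simp)) x
  refine ⟨_, by rw [heq]; exact hconv, fun v => ?_⟩
  rw [convolution_precompR_apply L hGloc (hch.fderiv ℝ) (hh.continuous_fderiv (by simp)) x v,
    convolution_def]
  have h1 := MeasureTheory.integral_sub_left_eq_self
    (fun z => G (x - z) * fderiv ℝ h z v) volume x
  simp only [sub_sub_cancel] at h1
  rw [← h1]
  simp only [hL, ContinuousLinearMap.mul_apply']

/-- Spatial derivative of the convolution integral, with the derivative moved to `G`. -/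
lemma fderiv_conv (hd : 1 ≤ d) (G h : (Fin d → ℝ) → ℝ) (hG : ContDiff ℝ (⊤ : ℕ∞) G)
    (hh : ContDiff ℝ (⊤ : ℕ∞) h) (hch : HasCompactSupport h) (x : Fin d → ℝ) :
    DifferentiableAt ℝ (fun y => ∫ z, G (y - z) * h z) x ∧
    ∀ j, fderiv ℝ (fun y => ∫ z, G (y - z) * h z) x (Pi.single j 1)
      = ∫ z, fderiv ℝ G (x - z) (Pi.single j 1) * h z := by
  obtain ⟨D, hD, hDv⟩ := conv_hasFDerivAt G h hG hh hch x
  refine ⟨hD.differentiableAt, fun j => ?_⟩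
  rw [hD.fderiv, hDv]
  exact ibp hd G h hG hh hch x j

end NonlocalARAux

namespace NonlocalARAux

variable {d : ℕ}

/-- Time differentiation under the integral sign. -/
lemma timeDeriv (G : (Fin d → ℝ) → ℝ) (hG : Continuous G)
    (ρ : ℝ → (Fin d → ℝ) → ℝ)
    (hρ : ContDiff ℝ (⊤ : ℕ∞) fun q : ℝ × (Fin d → ℝ) => ρ q.1 q.2)
    (T R : ℝ) (hR : 0 < R)
    (hsupp : ∀ t ∈ Set.Icc (0:ℝ) T, ∀ x : Fin d → ℝ, R ≤ ‖x‖ → ρ t x = 0)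
    (t : ℝ) (ht : t ∈ Set.Ioo (0:ℝ) T) (x : Fin d → ℝ) :
    HasDerivAt (fun s => ∫ z, G (x - z) * ρ s z)
      (∫ z, G (x - z) * deriv (fun s => ρ s z) t) t := by
  obtain ⟨ht0, htT⟩ := ht
  set Pj : ℝ × (Fin d → ℝ) → ℝ := fun q => ρ q.1 q.2 with hPj
  have hD : ∀ (s : ℝ) (z : Fin d → ℝ),
      HasDerivAt (fun s' => ρ s' z) (fderiv ℝ Pj (s, z) (1, 0)) s := by
    intro s z
    have h1 : HasDerivAt (fun s' : ℝ => (s', z)) ((1:ℝ), (0 : Fin d → ℝ)) s :=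
      (hasDerivAt_id s).prodMk (hasDerivAt_const s z)
    exact ((hρ.differentiable (by simp) (s, z)).hasFDerivAt).comp_hasDerivAt s h1
  set F' : ℝ → (Fin d → ℝ) → ℝ := fun s z => G (x - z) * fderiv ℝ Pj (s, z) (1, 0) with hF'
  set ε : ℝ := min t (T - t) with hε
  have hεpos : 0 < ε := lt_min ht0 (by linarith)
  have hball : ∀ s ∈ Metric.ball t ε, s ∈ Set.Ioo (0:ℝ) T := by
    intro s hs
    rw [Metric.mem_ball, Real.dist_eq, abs_sub_lt_iff] at hs
    constructor
    · have := min_le_left t (T - t); linarith [hs.2]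
    · have := min_le_right t (T - t); linarith [hs.1]
  have contF' : Continuous fun p : ℝ × (Fin d → ℝ) => G (x - p.2) * fderiv ℝ Pj p (1, 0) :=
    (hG.comp (continuous_const.sub continuous_snd)).mul
      ((hρ.continuous_fderiv (by simp)).clm_apply continuous_const)
  have hKcpt : IsCompact ((Metric.closedBall t ε) ×ˢ (Metric.closedBall (0 : Fin d → ℝ) R)) :=
    (isCompact_closedBall _ _).prod (isCompact_closedBall _ _)
  obtain ⟨C, hC⟩ := hKcpt.exists_bound_of_continuousOn contF'.continuousOn
  set bound : (Fin d → ℝ) → ℝ := (Metric.closedBall (0 : Fin d → ℝ) R).indicator fun _ => C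
    with hbounddef
  have hvanish : ∀ s ∈ Set.Ioo (0:ℝ) T, ∀ z : Fin d → ℝ, R ≤ ‖z‖ →
      fderiv ℝ Pj (s, z) (1, 0) = 0 := by
    intro s hs z hz
    have h0 : (fun s' => ρ s' z) =ᶠ[nhds s] fun _ => (0:ℝ) :=
      Filter.eventuallyEq_of_mem (Ioo_mem_nhds hs.1 hs.2)
        (fun s' hs' => hsupp s' (Set.Ioo_subset_Icc_self hs') z hz)
    rw [← (hD s z).deriv, h0.deriv_eq, deriv_const]
  have h_bound : ∀ᵐ z : Fin d → ℝ, ∀ s ∈ Metric.ball t ε, ‖F' s z‖ ≤ bound z := by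
    refine Filter.Eventually.of_forall fun z => fun s hs => ?_
    by_cases hzR : z ∈ Metric.closedBall (0 : Fin d → ℝ) R
    · rw [hbounddef, Set.indicator_of_mem hzR]
      exact hC (s, z) ⟨Metric.ball_subset_closedBall hs, hzR⟩
    · rw [hbounddef, Set.indicator_of_notMem hzR]
      have hz : R ≤ ‖z‖ := by
        rw [Metric.mem_closedBall, dist_zero_right, not_le] at hzR
        linarith
      rw [hF']
      simp only [hvanish s (hball s hs) z hz, mul_zero, norm_zero, le_refl]
  have bound_integrable : Integrable bound := by
    refine IntegrableOn.integrable_indicator ?_ measurableSet_closedBall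
    exact integrableOn_const measure_closedBall_lt_top.ne
  have hF_meas : ∀ᶠ s in nhds t,
      AEStronglyMeasurable (fun z => G (x - z) * ρ s z) (volume : Measure (Fin d → ℝ)) := by
    refine Filter.Eventually.of_forall fun s => ?_
    exact ((hG.comp (continuous_const.sub continuous_id)).mul
      (hρ.continuous.comp (continuous_const.prodMk continuous_id))).aestronglyMeasurable
  have hcρt : HasCompactSupport (ρ t) := by
    refine HasCompactSupport.intro (isCompact_closedBall (0 : Fin d → ℝ) R) fun z hz => ?_
    refine hsupp t ⟨le_of_lt ht0, le_of_lt htT⟩ z ?_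
    rw [Metric.mem_closedBall, dist_zero_right, not_le] at hz
    linarith
  have hF_int : Integrable (fun z => G (x - z) * ρ t z) := by
    apply Continuous.integrable_of_hasCompactSupport
    · exact (hG.comp (continuous_const.sub continuous_id)).mul
        (hρ.continuous.comp (continuous_const.prodMk continuous_id))
    · exact hcρt.mul_left
  have hF'_meas : AEStronglyMeasurable (F' t) (volume : Measure (Fin d → ℝ)) :=
    (contF'.comp (continuous_const.prodMk continuous_id)).aestronglyMeasurable
  have h_diff : ∀ᵐ z : Fin d → ℝ, ∀ s ∈ Metric.ball t ε,
      HasDerivAt (fun s' => G (x - z) * ρ s' z) (F' s z) s :=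
    Filter.Eventually.of_forall fun z s _ => (hD s z).const_mul (G (x - z))
  have conclit := (hasDerivAt_integral_of_dominated_loc_of_deriv_le (Metric.ball_mem_nhds t hεpos) hF_meas hF_int hF'_meas
    h_bound bound_integrable h_diff).2
  have heq : (fun z => F' t z) = fun z => G (x - z) * deriv (fun s => ρ s z) t :=
    funext fun z => by rw [(hD t z).deriv]
  rw [heq] at conclit
  exact conclit

end NonlocalARAux
section Main

open NonlocalARAux

/-- Second spatial partial derivative `∂²_{x_i x_j} K (z)` of a function on `ℝ^d`. -/
noncomputable def hess {d : ℕ} (K : (Fin d → ℝ) → ℝ) (i j : Fin d) (z : Fin d → ℝ) : ℝ :=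
  fderiv ℝ (fun y => fderiv ℝ K y (Pi.single j 1)) z (Pi.single i 1)

/-- For the nonlocal offset `w = u + ∇(K ∗ ρ)` with a smooth even kernel `K`, under the
continuity equation, the Aw–Rascle momentum equation is equivalent to the Euler-alignment
system with matrix-valued communication weight `Ψ = ∇²K`. -/
theorem nonlocal_AR_iff_euler_alignment
    (d : ℕ) (hd : 1 ≤ d) (T : ℝ) (hT : 0 < T)
    (K : (Fin d → ℝ) → ℝ) (hK : ContDiff ℝ (⊤ : ℕ∞) K)
    (hKeven : ∀ x : Fin d → ℝ, K (-x) = K x)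
    (ρ : ℝ → (Fin d → ℝ) → ℝ) (u w : ℝ → (Fin d → ℝ) → Fin d → ℝ)
    (hρ : ContDiff ℝ (⊤ : ℕ∞) fun q : ℝ × (Fin d → ℝ) => ρ q.1 q.2)
    (hρnonneg : ∀ (t : ℝ) (x : Fin d → ℝ), t ∈ Set.Icc 0 T → 0 ≤ ρ t x)
    (hu : ContDiff ℝ (⊤ : ℕ∞) fun q : ℝ × (Fin d → ℝ) => u q.1 q.2)
    (R : ℝ) (hR : 0 < R)
    (hsupp : ∀ t ∈ Set.Icc (0:ℝ) T, ∀ x : Fin d → ℝ, R ≤ ‖x‖ → ρ t x = 0)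
    (hw : ∀ (t : ℝ) (x : Fin d → ℝ) (j : Fin d),
      w t x j = u t x j + px (fun s y => ∫ z, K (y - z) * ρ s z) j t x)
    (hcont : ∀ t ∈ Set.Ioo (0:ℝ) T, ∀ x,
      pt ρ t x + ∑ i, px (fun s y => ρ s y * u s y i) i t x = 0) :
    (∀ t ∈ Set.Ioo (0:ℝ) T, ∀ (x : Fin d → ℝ) (j : Fin d),
        pt (fun s y => ρ s y * w s y j) t x
          + ∑ i, px (fun s y => ρ s y * u s y i * w s y j) i t x = 0)
      ↔ (∀ t ∈ Set.Ioo (0:ℝ) T, ∀ (x : Fin d → ℝ) (j : Fin d),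
        pt (fun s y => ρ s y * u s y j) t x
          + ∑ i, px (fun s y => ρ s y * u s y i * u s y j) i t x
          - ρ t x * ∫ y, (∑ i, (u t y i - u t x i) * hess K i j (x - y) * ρ t y) = 0) := by
  have key : ∀ t ∈ Set.Ioo (0:ℝ) T, ∀ (x : Fin d → ℝ) (j : Fin d),
      pt (fun s y => ρ s y * w s y j) t x
        + ∑ i, px (fun s y => ρ s y * u s y i * w s y j) i t x
      = pt (fun s y => ρ s y * u s y j) t x
        + ∑ i, px (fun s y => ρ s y * u s y i * u s y j) i t x
        - ρ t x * ∫ y, (∑ i, (u t y i - u t x i) * hess K i j (x - y) * ρ t y) := by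
    intro t ht x j
    have htIcc : t ∈ Set.Icc (0:ℝ) T := ⟨le_of_lt ht.1, le_of_lt ht.2⟩
    -- basic smoothness and support facts
    have hcρ : ∀ s ∈ Set.Icc (0:ℝ) T, HasCompactSupport (ρ s) := by
      intro s hs
      refine HasCompactSupport.intro (isCompact_closedBall (0 : Fin d → ℝ) R) fun z hz => ?_
      refine hsupp s hs z ?_
      rw [Metric.mem_closedBall, dist_zero_right, not_le] at hz
      linarith
    have hρs : ∀ s : ℝ, ContDiff ℝ (⊤ : ℕ∞) fun y => ρ s y := fun s =>
      hρ.comp (contDiff_const.prodMk contDiff_id)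
    have huslice : ∀ s : ℝ, ContDiff ℝ (⊤ : ℕ∞) fun y => u s y := fun s =>
      hu.comp (contDiff_const.prodMk contDiff_id)
    have hus : ∀ (s : ℝ) (i : Fin d), ContDiff ℝ (⊤ : ℕ∞) fun y => u s y i := fun s i =>
      contDiff_pi.mp (huslice s) i
    have hρtc : ∀ z : Fin d → ℝ, ContDiff ℝ (⊤ : ℕ∞) fun s => ρ s z := fun z =>
      hρ.comp (contDiff_id.prodMk contDiff_const)
    have hutc : ∀ (z : Fin d → ℝ) (i : Fin d), ContDiff ℝ (⊤ : ℕ∞) fun s => u s z i := fun z i =>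
      contDiff_pi.mp (hu.comp (contDiff_id.prodMk contDiff_const)) i
    have hcsupp_t : HasCompactSupport (ρ t) := hcρ t htIcc
    -- the kernel gradient component
    set G : (Fin d → ℝ) → ℝ := fun z => fderiv ℝ K z (Pi.single j 1) with hGdef
    have hdK : ContDiff ℝ (⊤ : ℕ∞) G := (hK.fderiv_right (by simp)).clm_apply contDiff_const
    have hesscont : ∀ i : Fin d, Continuous (hess K i j) := fun i =>
      ContDiff.continuous (n := (⊤ : ℕ∞)) ((hdK.fderiv_right (by simp)).clm_apply contDiff_const)
    -- the nonlocal term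
    set P : ℝ → (Fin d → ℝ) → ℝ := fun s y => ∫ z, G (y - z) * ρ s z with hPdef
    have hwP : ∀ s ∈ Set.Icc (0:ℝ) T, ∀ y : Fin d → ℝ, w s y j = u s y j + P s y := by
      intro s hs y
      rw [hw s y j]
      congr 1
      have h1 := (fderiv_conv hd K (ρ s) hK (hρs s) (hcρ s hs) y).2 j
      simpa [px, hPdef, hGdef] using h1
    -- integrability helper
    have hint : ∀ g : (Fin d → ℝ) → ℝ, Continuous g → Integrable fun z => g z * ρ t z := by
      intro g hg
      exact Continuous.integrable_of_hasCompactSupport (hg.mul (hρs t).continuous)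
        hcsupp_t.mul_left
    -- time derivative of the nonlocal term
    set V : ℝ := ∫ z, G (x - z) * deriv (fun s => ρ s z) t with hVdef
    have hPt : HasDerivAt (fun s => P s x) V t :=
      timeDeriv G hdK.continuous ρ hρ T R hR hsupp t ht x
    have hρx : HasDerivAt (fun s => ρ s x) (pt ρ t x) t := by
      have h2 : DifferentiableAt ℝ (fun s => ρ s x) t := ((hρtc x).differentiable (by simp)) t
      simpa [pt] using h2.hasDerivAt
    have hprod : HasDerivAt (fun s => ρ s x * P s x) (pt ρ t x * P t x + ρ t x * V) t :=
      hρx.mul hPt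
    have hdiffA : DifferentiableAt ℝ (fun s => ρ s x * u s x j) t :=
      (((hρtc x).mul (hutc x j)).differentiable (by simp)) t
    have hTime : pt (fun s y => ρ s y * w s y j) t x
        = pt (fun s y => ρ s y * u s y j) t x + (pt ρ t x * P t x + ρ t x * V) := by
      have hEE : (fun s => ρ s x * w s x j) =ᶠ[nhds t]
          fun s => ρ s x * u s x j + ρ s x * P s x := by
        refine Filter.eventuallyEq_of_mem (Ioo_mem_nhds ht.1 ht.2) fun s hs => ?_
        rw [hwP s (Set.Ioo_subset_Icc_self hs) x]
        ring
      have h1 : deriv (fun s => ρ s x * w s x j) t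
          = deriv (fun s => ρ s x * u s x j + ρ s x * P s x) t := hEE.deriv_eq
      have h2 : deriv (fun s => ρ s x * u s x j + ρ s x * P s x) t
          = deriv (fun s => ρ s x * u s x j) t + deriv (fun s => ρ s x * P s x) t :=
        deriv_add hdiffA hprod.differentiableAt
      have h3 : deriv (fun s => ρ s x * P s x) t = pt ρ t x * P t x + ρ t x * V :=
        hprod.deriv
      simp only [pt]
      rw [h1, h2, h3]
      rfl
    -- spatial part
    have hSpace : ∀ i : Fin d, px (fun s y => ρ s y * u s y i * w s y j) i t x
        = px (fun s y => ρ s y * u s y i * u s y j) i t x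
          + px (fun s y => ρ s y * u s y i) i t x * P t x
          + ρ t x * u t x i * ∫ z, hess K i j (x - z) * ρ t z := by
      intro i
      obtain ⟨D2, hD2, hD2v⟩ := conv_hasFDerivAt G (ρ t) hdK (hρs t) hcsupp_t x
      have hD2' : HasFDerivAt (P t) D2 x := hD2
      have hD2e : D2 (Pi.single i 1) = ∫ z, hess K i j (x - z) * ρ t z := by
        rw [← hD2.fderiv]
        exact (fderiv_conv hd G (ρ t) hdK (hρs t) hcsupp_t x).2 i
      have hFB : HasFDerivAt (fun y => ρ t y * u t y i)
          (fderiv ℝ (fun y => ρ t y * u t y i) x) x :=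
        ((((hρs t).mul (hus t i)).differentiable (by simp)) x).hasFDerivAt
      have hFA : HasFDerivAt (fun y => ρ t y * u t y i * u t y j)
          (fderiv ℝ (fun y => ρ t y * u t y i * u t y j) x) x :=
        (((((hρs t).mul (hus t i)).mul (hus t j)).differentiable (by simp)) x).hasFDerivAt
      have hmul : HasFDerivAt (fun y => (ρ t y * u t y i) * P t y)
          ((ρ t x * u t x i) • D2 + P t x • fderiv ℝ (fun y => ρ t y * u t y i) x) x :=
        hFB.mul hD2'
      have htot : HasFDerivAt (fun y => ρ t y * u t y i * u t y j + (ρ t y * u t y i) * P t y)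
          (fderiv ℝ (fun y => ρ t y * u t y i * u t y j) x
            + ((ρ t x * u t x i) • D2 + P t x • fderiv ℝ (fun y => ρ t y * u t y i) x)) x :=
        hFA.add hmul
      have hstep : px (fun s y => ρ s y * u s y i * w s y j) i t x
          = fderiv ℝ (fun y => ρ t y * u t y i * u t y j + (ρ t y * u t y i) * P t y) x
              (Pi.single i 1) := by
        have hfun : (fun y => ρ t y * u t y i * w t y j)
            = fun y => ρ t y * u t y i * u t y j + (ρ t y * u t y i) * P t y := by
          funext y
          rw [hwP t htIcc y]
          ring
        simp only [px]
        rw [hfun]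
      have hval : fderiv ℝ (fun y => ρ t y * u t y i * u t y j + (ρ t y * u t y i) * P t y) x
          = fderiv ℝ (fun y => ρ t y * u t y i * u t y j) x
            + ((ρ t x * u t x i) • D2 + P t x • fderiv ℝ (fun y => ρ t y * u t y i) x) :=
        htot.fderiv
      rw [hstep, hval]
      simp only [ContinuousLinearMap.add_apply, ContinuousLinearMap.smul_apply, smul_eq_mul]
      rw [hD2e]
      simp only [px]
      ring
    -- rewriting V using the continuity equation and integration by parts
    have hintc : ∀ i : Fin d,
        Integrable fun z => G (x - z) * px (fun s y => ρ s y * u s y i) i t z := by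
      intro i
      have hcd : HasCompactSupport fun y => ρ t y * u t y i := hcsupp_t.mul_right
      apply Continuous.integrable_of_hasCompactSupport
      · exact (hdK.continuous.comp (continuous_const.sub continuous_id)).mul
          ((((hρs t).mul (hus t i)).continuous_fderiv (by simp)).clm_apply continuous_const)
      · exact HasCompactSupport.mul_left
          ((hcd.fderiv ℝ).comp_left (g := fun L : (Fin d → ℝ) →L[ℝ] ℝ => L (Pi.single i 1)) rfl)
    have e4 : ∀ i : Fin d, ∫ z, G (x - z) * px (fun s y => ρ s y * u s y i) i t z
        = ∫ z, hess K i j (x - z) * (ρ t z * u t z i) :=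
      fun i => ibp hd G (fun y => ρ t y * u t y i) hdK ((hρs t).mul (hus t i))
        hcsupp_t.mul_right x i
    have hVeq : V = - ∑ i, ∫ z, hess K i j (x - z) * (ρ t z * u t z i) := by
      have e1 : ∀ z : Fin d → ℝ, deriv (fun s => ρ s z) t
          = - ∑ i, px (fun s y => ρ s y * u s y i) i t z := by
        intro z
        have h6 := hcont t ht z
        have h7 : pt ρ t z = deriv (fun s => ρ s z) t := rfl
        linarith
      have e2 : V = ∫ z, G (x - z) * (- ∑ i, px (fun s y => ρ s y * u s y i) i t z) := by
        rw [hVdef]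
        congr 1
        funext z
        rw [e1 z]
      have e3 : (fun z => G (x - z) * (- ∑ i, px (fun s y => ρ s y * u s y i) i t z))
          = fun z => ∑ i, -(G (x - z) * px (fun s y => ρ s y * u s y i) i t z) := by
        funext z
        rw [mul_neg, Finset.mul_sum, ← Finset.sum_neg_distrib]
      rw [e2, e3, MeasureTheory.integral_finset_sum Finset.univ
        (f := fun i z => -(G (x - z) * px (fun s y => ρ s y * u s y i) i t z))
        fun i _ => (hintc i).neg]
      rw [← Finset.sum_neg_distrib]
      refine Finset.sum_congr rfl fun i _ => ?_
      rw [MeasureTheory.integral_neg, e4 i]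
    -- the alignment integral
    have hIint : ∀ i : Fin d,
        Integrable fun z => (u t z i - u t x i) * hess K i j (x - z) * ρ t z := fun i =>
      hint _ (((hus t i).continuous.sub continuous_const).mul
        ((hesscont i).comp (continuous_const.sub continuous_id)))
    have hI : (∫ y, ∑ i, (u t y i - u t x i) * hess K i j (x - y) * ρ t y)
        = ∑ i, ((∫ z, hess K i j (x - z) * (ρ t z * u t z i))
            - u t x i * ∫ z, hess K i j (x - z) * ρ t z) := by
      rw [MeasureTheory.integral_finset_sum Finset.univ fun i _ => hIint i]
      refine Finset.sum_congr rfl fun i _ => ?_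
      have int1 : Integrable fun z => hess K i j (x - z) * (ρ t z * u t z i) :=
        Continuous.integrable_of_hasCompactSupport
          (((hesscont i).comp (continuous_const.sub continuous_id)).mul
            ((hρs t).continuous.mul (hus t i).continuous))
          (HasCompactSupport.mul_left hcsupp_t.mul_right)
      have int2 : Integrable fun z => u t x i * (hess K i j (x - z) * ρ t z) :=
        (hint _ ((hesscont i).comp (continuous_const.sub continuous_id))).const_mul (u t x i)
      calc ∫ z, (u t z i - u t x i) * hess K i j (x - z) * ρ t z
          = ∫ z, (hess K i j (x - z) * (ρ t z * u t z i)
              - u t x i * (hess K i j (x - z) * ρ t z)) := by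
            congr 1
            funext z
            ring
        _ = (∫ z, hess K i j (x - z) * (ρ t z * u t z i))
              - ∫ z, u t x i * (hess K i j (x - z) * ρ t z) :=
            MeasureTheory.integral_sub int1 int2
        _ = (∫ z, hess K i j (x - z) * (ρ t z * u t z i))
              - u t x i * ∫ z, hess K i j (x - z) * ρ t z := by
            rw [MeasureTheory.integral_const_mul]
    -- put everything together
    rw [hTime, Finset.sum_congr rfl fun i _ => hSpace i, hI, hVeq]
    rw [Finset.sum_add_distrib, Finset.sum_add_distrib, ← Finset.sum_mul,
      Finset.sum_sub_distrib]
    have hc : ∑ i, px (fun s y => ρ s y * u s y i) i t x = - pt ρ t x := by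
      have := hcont t ht x
      linarith
    rw [hc]
    have hfin : ∑ i, ρ t x * u t x i * ∫ z, hess K i j (x - z) * ρ t z
        = ρ t x * ∑ i, u t x i * ∫ z, hess K i j (x - z) * ρ t z := by
      rw [Finset.mul_sum]
      exact Finset.sum_congr rfl fun i _ => mul_assoc _ _ _
    rw [hfin]
    ring
  constructor
  · intro H t ht x j
    rw [← key t ht x j]
    exact H t ht x j
  · intro H t ht x j
    rw [key t ht x j]
    exact H t ht x j

end Main
end

section
/- Let T > 0, let λ : (0,1) → (0,∞) be continuously differentiable, and define p : (0,1) → ℝ by p(r) = ∫_{1/2}^{r} λ(s)/s² ds. Let ρ : (0,T)×ℝ → ℝ be smooth with 0 < ρ(t,x) < 1 for all (t,x), let u : (0,T)×ℝ → ℝ be smooth, and set w := u + ∂_x(p∘ρ). Assume the continuity equation ∂_t ρ + ∂_x(ρ u) = 0 holds on (0,T)×ℝ. Then the momentum equation ∂_t(ρ w) + ∂_x(ρ u w) = 0 holds if and only if ∂_t(ρ u) + ∂_x(ρ u²) − ∂_x( λ(ρ) ∂_x u ) = 0; that is, the one-dimensional dissipative Aw–Rascle system with this cost function coincides with the lubrication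 model with effective viscosity λ(ρ). -/
open Set intervalIntegral
lemma slice_x' {F : ℝ × ℝ → ℝ} {t x : ℝ} (hF : DifferentiableAt ℝ F (t, x)) :
    HasDerivAt (fun y => F (t, y)) (fderiv ℝ F (t, x) (0, 1)) x :=
  hF.hasFDerivAt.comp_hasDerivAt x (HasDerivAt.prodMk (hasDerivAt_const x t) (hasDerivAt_id x))

lemma slice_t' {F : ℝ × ℝ → ℝ} {t x : ℝ} (hF : DifferentiableAt ℝ F (t, x)) :
    HasDerivAt (fun s => F (s, x)) (fderiv ℝ F (t, x) (1, 0)) t :=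
  hF.hasFDerivAt.comp_hasDerivAt t (HasDerivAt.prodMk (hasDerivAt_id t) (hasDerivAt_const t x))

lemma smooth_dvec' {F : ℝ × ℝ → ℝ} (hF : ContDiff ℝ (⊤ : ℕ∞) F) (v : ℝ × ℝ) :
    ContDiff ℝ (⊤ : ℕ∞) (fun q => fderiv ℝ F q v) :=
  (hF.fderiv_right (by simp)).clm_apply contDiff_const

lemma fderiv_dvec' {F : ℝ × ℝ → ℝ} (hF : ContDiff ℝ (⊤ : ℕ∞) F) (v w z : ℝ × ℝ) :
    fderiv ℝ (fun q => fderiv ℝ F q v) z w = fderiv ℝ (fderiv ℝ F) z w v := by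
  have hc : DifferentiableAt ℝ (fderiv ℝ F) z :=
    ((hF.fderiv_right (m := (⊤ : ℕ∞)) (by simp)).differentiable (by simp)) z
  rw [fderiv_clm_apply hc (differentiableAt_const v)]
  simp

lemma schwarz' {F : ℝ × ℝ → ℝ} (hF : ContDiff ℝ (⊤ : ℕ∞) F) (v w z : ℝ × ℝ) :
    fderiv ℝ (fun q => fderiv ℝ F q v) z w = fderiv ℝ (fun q => fderiv ℝ F q w) z v := by
  rw [fderiv_dvec' hF, fderiv_dvec' hF]
  exact (hF.contDiffAt.isSymmSndFDerivAt (by rw [minSmoothness_of_isRCLikeNormedField]; exact WithTop.coe_le_coe.mpr le_top)).eq w v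

lemma pderiv' {lam p : ℝ → ℝ} (hlam : ContDiffOn ℝ 1 lam (Set.Ioo 0 1))
    (hp : ∀ r, p r = ∫ s in (1/2 : ℝ)..r, lam s / s ^ 2)
    {r : ℝ} (hr : r ∈ Set.Ioo (0:ℝ) 1) :
    HasDerivAt p (lam r / r ^ 2) r := by
  have hP : p = fun r => ∫ s in (1/2 : ℝ)..r, lam s / s ^ 2 := funext hp
  have hcont : ContinuousOn (fun s => lam s / s ^ 2) (Set.Ioo (0:ℝ) 1) := by
    apply hlam.continuousOn.div (by fun_prop)
    intro s hs
    exact pow_ne_zero 2 (ne_of_gt hs.1)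
  have h2 : (1/2 : ℝ) ∈ Set.Ioo (0:ℝ) 1 := by norm_num
  have huIcc : Set.uIcc (1/2 : ℝ) r ⊆ Set.Ioo 0 1 :=
    (Set.ordConnected_Ioo).uIcc_subset h2 hr
  have hint : IntervalIntegrable (fun s => lam s / s ^ 2) MeasureTheory.volume (1/2) r :=
    (hcont.mono huIcc).intervalIntegrable
  have hmeas : StronglyMeasurableAtFilter (fun s => lam s / s ^ 2) (nhds r) :=
    hcont.stronglyMeasurableAtFilter isOpen_Ioo r hr
  have hca : ContinuousAt (fun s => lam s / s ^ 2) r :=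
    hcont.continuousAt (isOpen_Ioo.mem_nhds hr)
  rw [hP]
  exact integral_hasDerivAt_right hint hmeas hca

/-- With the cost function `p(r) = ∫_{1/2}^r λ(s)/s² ds`, under the continuity equation,
the one-dimensional dissipative Aw–Rascle momentum equation is equivalent to the momentum
equation of the lubrication model with effective viscosity `λ(ρ)`. -/
theorem oneD_AR_iff_lubrication
    (T : ℝ) (hT : 0 < T)
    (lam : ℝ → ℝ) (hlam : ContDiffOn ℝ 1 lam (Set.Ioo 0 1))
    (hlampos : ∀ r ∈ Set.Ioo (0:ℝ) 1, 0 < lam r)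
    (p : ℝ → ℝ) (hp : ∀ r, p r = ∫ s in (1/2 : ℝ)..r, lam s / s ^ 2)
    (ρ u w : ℝ → ℝ → ℝ)
    (hρ : ContDiff ℝ (⊤ : ℕ∞) fun q : ℝ × ℝ => ρ q.1 q.2)
    (hρrange : ∀ t ∈ Set.Ioo (0:ℝ) T, ∀ x, ρ t x ∈ Set.Ioo (0:ℝ) 1)
    (hu : ContDiff ℝ (⊤ : ℕ∞) fun q : ℝ × ℝ => u q.1 q.2)
    (hw : ∀ t x, w t x = u t x + px1 (fun s y => p (ρ s y)) t x)
    (hcont : ∀ t ∈ Set.Ioo (0:ℝ) T, ∀ x,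
      pt1 ρ t x + px1 (fun s y => ρ s y * u s y) t x = 0) :
    (∀ t ∈ Set.Ioo (0:ℝ) T, ∀ x,
        pt1 (fun s y => ρ s y * w s y) t x
          + px1 (fun s y => ρ s y * u s y * w s y) t x = 0)
      ↔ (∀ t ∈ Set.Ioo (0:ℝ) T, ∀ x,
        pt1 (fun s y => ρ s y * u s y) t x
          + px1 (fun s y => ρ s y * u s y ^ 2) t x
          - px1 (fun s y => lam (ρ s y) * px1 u s y) t x = 0) := by
  set Fρ : ℝ × ℝ → ℝ := fun q => ρ q.1 q.2 with hFρ
  set Fu : ℝ × ℝ → ℝ := fun q => u q.1 q.2 with hFu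
  have hρd : Differentiable ℝ Fρ := hρ.differentiable (by simp)
  have hud : Differentiable ℝ Fu := hu.differentiable (by simp)
  set Gx : ℝ × ℝ → ℝ := fun q => fderiv ℝ Fρ q (0, 1) with hGx
  set Gt : ℝ × ℝ → ℝ := fun q => fderiv ℝ Fρ q (1, 0) with hGt
  set Gux : ℝ × ℝ → ℝ := fun q => fderiv ℝ Fu q (0, 1) with hGux
  have hGxd : Differentiable ℝ Gx := (smooth_dvec' hρ (0, 1)).differentiable (by simp)
  have hGtd : Differentiable ℝ Gt := (smooth_dvec' hρ (1, 0)).differentiable (by simp)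
  have hGuxd : Differentiable ℝ Gux := (smooth_dvec' hu (0, 1)).differentiable (by simp)
  -- representations of first partials
  have Hρx : ∀ s y : ℝ, HasDerivAt (fun y' => ρ s y') (Gx (s, y)) y :=
    fun s y => slice_x' (hρd (s, y))
  have Hρt : ∀ s y : ℝ, HasDerivAt (fun s' => ρ s' y) (Gt (s, y)) s :=
    fun s y => slice_t' (hρd (s, y))
  have Hux : ∀ s y : ℝ, HasDerivAt (fun y' => u s y') (Gux (s, y)) y :=
    fun s y => slice_x' (hud (s, y))
  have Hut : ∀ s y : ℝ, HasDerivAt (fun s' => u s' y)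
      (fderiv ℝ Fu (s, y) (1, 0)) s := fun s y => slice_t' (hud (s, y))
  -- derivative of lam at interior points
  have hlamAt : ∀ r ∈ Set.Ioo (0:ℝ) 1, HasDerivAt lam (deriv lam r) r := fun r hr =>
    (((hlam.differentiableOn one_ne_zero).differentiableAt (isOpen_Ioo.mem_nhds hr))).hasDerivAt
  -- formula for w on the domain
  have hw' : ∀ s ∈ Set.Ioo (0:ℝ) T, ∀ y, w s y
      = u s y + lam (ρ s y) / ρ s y ^ 2 * Gx (s, y) := by
    intro s hs y
    have hpd : HasDerivAt p (lam (ρ s y) / ρ s y ^ 2) (ρ s y) :=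
      pderiv' hlam hp (hρrange s hs y)
    have hchain := (hpd.comp y (Hρx s y)).deriv
    simp only [Function.comp_def] at hchain
    have hpx : px1 (fun s y => p (ρ s y)) s y = lam (ρ s y) / ρ s y ^ 2 * Gx (s, y) := by
      simp only [px1]
      exact hchain
    rw [hw s y, hpx]
  -- pointwise key identity
  have key : ∀ t ∈ Set.Ioo (0:ℝ) T, ∀ x,
      pt1 (fun s y => ρ s y * w s y) t x
        + px1 (fun s y => ρ s y * u s y * w s y) t x
      = pt1 (fun s y => ρ s y * u s y) t x
        + px1 (fun s y => ρ s y * u s y ^ 2) t x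
        - px1 (fun s y => lam (ρ s y) * px1 u s y) t x := by
    intro t ht x
    have ha : ρ t x ∈ Set.Ioo (0:ℝ) 1 := hρrange t ht x
    have ha0 : ρ t x ≠ 0 := ne_of_gt ha.1
    have hlA : HasDerivAt lam (deriv lam (ρ t x)) (ρ t x) := hlamAt _ ha
    -- slice derivatives of Gx, Gux at (t,x)
    have HGxt : HasDerivAt (fun s => Gx (s, x)) (fderiv ℝ Gx (t, x) (1, 0)) t :=
      slice_t' (hGxd (t, x))
    have HGxx : HasDerivAt (fun y => Gx (t, y)) (fderiv ℝ Gx (t, x) (0, 1)) x :=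
      slice_x' (hGxd (t, x))
    have HGuxx : HasDerivAt (fun y => Gux (t, y)) (fderiv ℝ Gux (t, x) (0, 1)) x :=
      slice_x' (hGuxd (t, x))
    -- t-direction composite derivatives
    have Hlamt : HasDerivAt (fun s => lam (ρ s x)) (deriv lam (ρ t x) * Gt (t, x)) t :=
      hlA.comp t (Hρt t x)
    have Hlamx : HasDerivAt (fun y => lam (ρ t y)) (deriv lam (ρ t x) * Gx (t, x)) x :=
      hlA.comp x (Hρx t x)
    have hpow0 : ρ t x ^ 2 ≠ 0 := pow_ne_zero 2 ha0
    -- rewrite goal partial derivatives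
    simp only [pt1, px1]
    -- e1 : pt1 (ρ w)
    have heq1 : (fun s => ρ s x * w s x)
        =ᶠ[nhds t] fun s => ρ s x * (u s x + lam (ρ s x) / ρ s x ^ 2 * Gx (s, x)) := by
      filter_upwards [isOpen_Ioo.mem_nhds ht] with s hs
      rw [hw' s hs x]
    have HD1 := (Hρt t x).fun_mul ((Hut t x).fun_add
      ((Hlamt.fun_div ((Hρt t x).fun_pow 2) hpow0).fun_mul HGxt))
    have e1 := (HD1.congr_of_eventuallyEq heq1).deriv
    -- e2 : px1 (ρ u w)
    have heq2 : (fun y => ρ t y * u t y * w t y)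
        =ᶠ[nhds x] fun y => ρ t y * u t y
          * (u t y + lam (ρ t y) / ρ t y ^ 2 * Gx (t, y)) :=
      Filter.Eventually.of_forall fun y => by simp only [hw' t ht y]
    have HD2 := ((Hρx t x).fun_mul (Hux t x)).fun_mul ((Hux t x).fun_add
      ((Hlamx.fun_div ((Hρx t x).fun_pow 2) hpow0).fun_mul HGxx))
    have e2 := (HD2.congr_of_eventuallyEq heq2).deriv
    -- e3, e4
    have e3 := ((Hρt t x).fun_mul (Hut t x)).deriv
    have e4 := ((Hρx t x).fun_mul ((Hux t x).fun_pow 2)).deriv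
    -- e5 : px1 (lam(ρ) u_x)
    have heq5 : (fun y => lam (ρ t y) * deriv (fun y' => u t y') y)
        =ᶠ[nhds x] fun y => lam (ρ t y) * Gux (t, y) :=
      Filter.Eventually.of_forall fun y => by simp only [(Hux t y).deriv]
    have e5 := ((Hlamx.fun_mul HGuxx).congr_of_eventuallyEq heq5).deriv
    rw [e1, e2, e3, e4, e5]
    -- continuity equation at (t,x)
    have hc0 := hcont t ht x
    simp only [pt1, px1] at hc0
    rw [(Hρt t x).deriv, ((Hρx t x).fun_mul (Hux t x)).deriv] at hc0
    have hrt : Gt (t, x) = -(Gx (t, x) * u t x + ρ t x * Gux (t, x)) := by linarith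
    -- mixed second derivative via Schwarz and differentiated continuity equation
    have hmix : fderiv ℝ Gx (t, x) (1, 0) = fderiv ℝ Gt (t, x) (0, 1) :=
      schwarz' hρ (0, 1) (1, 0) (t, x)
    have heqm : (fun y => Gt (t, y))
        =ᶠ[nhds x] fun y => -(Gx (t, y) * u t y + ρ t y * Gux (t, y)) := by
      refine Filter.Eventually.of_forall fun y => ?_
      show Gt (t, y) = -(Gx (t, y) * u t y + ρ t y * Gux (t, y))
      have hcy := hcont t ht y
      simp only [pt1, px1] at hcy
      rw [(Hρt t y).deriv, ((Hρx t y).fun_mul (Hux t y)).deriv] at hcy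
      linarith
    have HM := ((HGxx.fun_mul (Hux t x)).fun_add ((Hρx t x).fun_mul HGuxx)).fun_neg.congr_of_eventuallyEq heqm
    have hm : fderiv ℝ Gx (t, x) (1, 0)
        = -(fderiv ℝ Gx (t, x) (0, 1) * u t x + Gx (t, x) * Gux (t, x)
            + (Gx (t, x) * Gux (t, x) + ρ t x * fderiv ℝ Gux (t, x) (0, 1))) := by
      rw [hmix, ← (slice_x' (hGtd (t, x))).deriv]
      exact HM.deriv
    rw [hrt, hm]
    field_simp
    ring
  constructor
  · intro h t ht x
    have h1 := h t ht x
    have h2 := key t ht x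
    linarith
  · intro h t ht x
    have h1 := h t ht x
    have h2 := key t ht x
    linarith
end

section
/- Let d ≥ 1, T > 0, let p : (0,∞) → ℝ be smooth, let Q : (0,∞) → ℝ be smooth with Q′(s) = √s · p′(s) for all s > 0, and let E : (0,∞) → ℝ be smooth with E′(s) = p(s) for all s > 0. Let ρ : [0,T]×ℝ^d → ℝ be smooth, strictly positive and ℤ^d-periodic in x, and let w : [0,T]×ℝ^d → ℝ^d be smooth and ℤ^d-periodic in x. Assume that on (0,T)×ℝ^d the symmetrized system holds: ∂_t ρ + Σ_i ∂_{x_i}(ρ w_i) − Σ_i ∂_{x_i}( √ρ ∂_{x_i}(Q∘ρ) ) = 0 and ∂_t(ρ w_j) + Σ_i ∂_{x_i}(ρ w_i w_j) = Σ_i ∂_{x_i}( ∂_{x_i}(Q∘ρ) √ρ w_j ) for all j = 1,…,d. Then for every t ∈ [0,T]: ∫_{[0,1)^d} ( ½ ρ |w|² + E(ρ) )(t,x) dx + ∫_0^t ∫_{[0,1)^d} |∇_x(Q∘ρ)(s,x)|² dx ds = ∫_{[0,1)^d} ( ½ ρ |w|² + E(ρ) )(0,x) dx + ∫_0^t ∫_{[0,1)^d}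 √ρ(s,x) · w(s,x) · ∇_x(Q∘ρ)(s,x) dx ds. -/
open MeasureTheory

def cell (d : ℕ) : Set (Fin d → ℝ) := Set.univ.pi fun _ => Set.Ico (0:ℝ) 1

section helpers

variable {d : ℕ}

lemma px_mul (f g : ℝ → (Fin d → ℝ) → ℝ) (i : Fin d) (t : ℝ) (x : Fin d → ℝ)
    (hf : DifferentiableAt ℝ (f t) x) (hg : DifferentiableAt ℝ (g t) x) :
    px (fun s y => f s y * g s y) i t x = px f i t x * g t x + f t x * px g i t x := by
  have h := fderiv_fun_mul (𝕜 := ℝ) hf hg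
  simp only [px]
  rw [h]
  simp [smul_eq_mul]
  ring

lemma pt_mul (f g : ℝ → (Fin d → ℝ) → ℝ) (t : ℝ) (x : Fin d → ℝ)
    (hf : DifferentiableAt ℝ (fun s => f s x) t) (hg : DifferentiableAt ℝ (fun s => g s x) t) :
    pt (fun s y => f s y * g s y) t x = pt f t x * g t x + f t x * pt g t x := by
  simp only [pt]
  exact deriv_mul hf hg

lemma px_sum {m : ℕ} (f : Fin m → ℝ → (Fin d → ℝ) → ℝ) (i : Fin d) (t : ℝ) (x : Fin d → ℝ)
    (hf : ∀ j, DifferentiableAt ℝ (f j t) x) :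
    px (fun s y => ∑ j, f j s y) i t x = ∑ j, px (f j) i t x := by
  simp only [px]
  rw [fderiv_fun_sum fun j _ => hf j]
  simp

lemma pt_sum {m : ℕ} (f : Fin m → ℝ → (Fin d → ℝ) → ℝ) (t : ℝ) (x : Fin d → ℝ)
    (hf : ∀ j, DifferentiableAt ℝ (fun s => f j s x) t) :
    pt (fun s y => ∑ j, f j s y) t x = ∑ j, pt (f j) t x := by
  simp only [pt]
  exact deriv_fun_sum fun j _ => hf j

lemma px_comp (φ : ℝ → ℝ) (f : ℝ → (Fin d → ℝ) → ℝ) (i : Fin d) (t : ℝ) (x : Fin d → ℝ)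
    (hφ : DifferentiableAt ℝ φ (f t x)) (hf : DifferentiableAt ℝ (f t) x) :
    px (fun s y => φ (f s y)) i t x = deriv φ (f t x) * px f i t x := by
  simp only [px]
  rw [show (fun y => φ (f t y)) = φ ∘ (f t) from rfl, fderiv_comp x hφ hf]
  simp only [ContinuousLinearMap.comp_apply]
  generalize fderiv ℝ (f t) x (Pi.single i 1) = c
  calc fderiv ℝ φ (f t x) c = fderiv ℝ φ (f t x) (c • 1) := by norm_num
    _ = c • fderiv ℝ φ (f t x) 1 := (fderiv ℝ φ (f t x)).map_smul c 1
    _ = deriv φ (f t x) * c := by rw [fderiv_apply_one_eq_deriv]; simp [smul_eq_mul, mul_comm]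

lemma pt_comp (φ : ℝ → ℝ) (f : ℝ → (Fin d → ℝ) → ℝ) (t : ℝ) (x : Fin d → ℝ)
    (hφ : DifferentiableAt ℝ φ (f t x)) (hf : DifferentiableAt ℝ (fun s => f s x) t) :
    pt (fun s y => φ (f s y)) t x = deriv φ (f t x) * pt f t x := by
  simp only [pt]
  exact deriv_comp t hφ hf

lemma px_add (f g : ℝ → (Fin d → ℝ) → ℝ) (i : Fin d) (t : ℝ) (x : Fin d → ℝ)
    (hf : DifferentiableAt ℝ (f t) x) (hg : DifferentiableAt ℝ (g t) x) :
    px (fun s y => f s y + g s y) i t x = px f i t x + px g i t x := by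
  simp only [px]
  rw [fderiv_fun_add hf hg]
  simp

lemma px_sub (f g : ℝ → (Fin d → ℝ) → ℝ) (i : Fin d) (t : ℝ) (x : Fin d → ℝ)
    (hf : DifferentiableAt ℝ (f t) x) (hg : DifferentiableAt ℝ (g t) x) :
    px (fun s y => f s y - g s y) i t x = px f i t x - px g i t x := by
  simp only [px]
  rw [fderiv_fun_sub hf hg]
  simp

lemma pt_add (f g : ℝ → (Fin d → ℝ) → ℝ) (t : ℝ) (x : Fin d → ℝ)
    (hf : DifferentiableAt ℝ (fun s => f s x) t) (hg : DifferentiableAt ℝ (fun s => g s x) t) :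
    pt (fun s y => f s y + g s y) t x = pt f t x + pt g t x := by
  simp only [pt]
  exact deriv_add hf hg

lemma px_eq_joint (f : ℝ → (Fin d → ℝ) → ℝ) (i : Fin d) (t : ℝ) (x : Fin d → ℝ)
    (h : DifferentiableAt ℝ (fun q : ℝ × (Fin d → ℝ) => f q.1 q.2) (t, x)) :
    px f i t x
      = fderiv ℝ (fun q : ℝ × (Fin d → ℝ) => f q.1 q.2) (t, x) (0, Pi.single i 1) := by
  have h1 : HasFDerivAt (fun y : Fin d → ℝ => (t, y))
      (ContinuousLinearMap.inr ℝ ℝ (Fin d → ℝ)) x := hasFDerivAt_prodMk_right t x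
  have h2 := h.hasFDerivAt.comp x h1
  have h3 : HasFDerivAt (f t)
      ((fderiv ℝ (fun q : ℝ × (Fin d → ℝ) => f q.1 q.2) (t, x)).comp
        (ContinuousLinearMap.inr ℝ ℝ (Fin d → ℝ))) x := h2
  simp only [px]
  rw [h3.fderiv]
  simp

lemma pt_eq_joint (f : ℝ → (Fin d → ℝ) → ℝ) (t : ℝ) (x : Fin d → ℝ)
    (h : DifferentiableAt ℝ (fun q : ℝ × (Fin d → ℝ) => f q.1 q.2) (t, x)) :
    pt f t x
      = fderiv ℝ (fun q : ℝ × (Fin d → ℝ) => f q.1 q.2) (t, x) (1, 0) := by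
  have h1 : HasFDerivAt (fun s : ℝ => (s, x))
      (ContinuousLinearMap.inl ℝ ℝ (Fin d → ℝ)) t := hasFDerivAt_prodMk_left t x
  have h2 := h.hasFDerivAt.comp t h1
  have h3 : HasFDerivAt (fun s => f s x)
      ((fderiv ℝ (fun q : ℝ × (Fin d → ℝ) => f q.1 q.2) (t, x)).comp
        (ContinuousLinearMap.inl ℝ ℝ (Fin d → ℝ))) t := h2
  simp only [pt]
  rw [h3.hasDerivAt.deriv]
  simp

lemma fderiv_shift (g : (Fin d → ℝ) → ℝ) (c x : Fin d → ℝ) (hper : ∀ y, g (y + c) = g y)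
    (hg : DifferentiableAt ℝ g (x + c)) : fderiv ℝ g x = fderiv ℝ g (x + c) := by
  have h1 : HasFDerivAt (fun y : Fin d → ℝ => y + c)
      (ContinuousLinearMap.id ℝ (Fin d → ℝ)) x := (hasFDerivAt_id x).add_const c
  have h2 := hg.hasFDerivAt.comp x h1
  have hfun : (fun y : Fin d → ℝ => g (y + c)) = g := funext hper
  have h3 : HasFDerivAt (fun y : Fin d → ℝ => g (y + c)) (fderiv ℝ g (x + c)) x := by
    exact h2
  rw [hfun] at h3
  exact h3.fderiv

lemma cell_subset_Icc : cell d ⊆ Set.Icc (0 : Fin d → ℝ) 1 := by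
  intro x hx
  constructor <;> intro i
  · exact (hx i (Set.mem_univ i)).1
  · exact le_of_lt (hx i (Set.mem_univ i)).2

lemma measurableSet_cell : MeasurableSet (cell d) :=
  MeasurableSet.univ_pi fun _ => measurableSet_Ico

lemma cell_ae_eq_Icc : cell d =ᵐ[(volume : Measure (Fin d → ℝ))] Set.Icc (0 : Fin d → ℝ) 1 := by
  rw [volume_pi]
  exact MeasureTheory.Measure.univ_pi_Ico_ae_eq_Icc

lemma integrableOn_cell_of_continuous {f : (Fin d → ℝ) → ℝ} (hf : Continuous f) :
    IntegrableOn f (cell d) :=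
  (hf.continuousOn.integrableOn_compact isCompact_Icc).mono_set cell_subset_Icc

end helpers

lemma integral_px_zero {n : ℕ} (g : (Fin (n+1) → ℝ) → ℝ) (hg : ContDiff ℝ 1 g)
    (hper : ∀ (x : Fin (n+1) → ℝ) (k : Fin (n+1) → ℤ), g (x + fun i => (k i : ℝ)) = g x)
    (i₀ : Fin (n+1)) :
    ∫ x in cell (n+1), fderiv ℝ g x (Pi.single i₀ 1) = 0 := by
  classical
  have hstep : ∫ x in cell (n+1), fderiv ℝ g x (Pi.single i₀ 1)
      = ∫ x in Set.Icc (0 : Fin (n+1) → ℝ) 1, fderiv ℝ g x (Pi.single i₀ 1) :=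
    setIntegral_congr_set cell_ae_eq_Icc
  rw [hstep]
  set f : Fin (n+1) → (Fin (n+1) → ℝ) → ℝ := fun i x => if i = i₀ then g x else 0 with hf
  set f' : Fin (n+1) → (Fin (n+1) → ℝ) → (Fin (n+1) → ℝ) →L[ℝ] ℝ :=
    fun i x => if i = i₀ then fderiv ℝ g x else 0 with hf'
  have hdiv : ∀ x : Fin (n+1) → ℝ,
      (∑ i, f' i x (Pi.single i 1)) = fderiv ℝ g x (Pi.single i₀ 1) := by
    intro x
    rw [Finset.sum_eq_single i₀]
    · simp [hf']
    · intro b _ hb; simp [hf', hb]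
    · simp
  have Hc : ∀ i, ContinuousOn (f i) (Set.Icc (0 : Fin (n+1) → ℝ) 1) := by
    intro i
    by_cases h : i = i₀ <;> simp [hf, h]
    · exact hg.continuous.continuousOn
    · exact continuousOn_const
  have Hd : ∀ x ∈ (Set.pi Set.univ fun i => Set.Ioo ((0:Fin (n+1) → ℝ) i) ((1:Fin (n+1) → ℝ) i))
      \ (∅ : Set (Fin (n+1) → ℝ)), ∀ i, HasFDerivAt (f i) (f' i x) x := by
    intro x _ i
    by_cases h : i = i₀ <;> simp [hf, hf', h]
    · exact (hg.differentiable one_ne_zero x).hasFDerivAt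
    · exact hasFDerivAt_const 0 x
  have Hi : IntegrableOn (fun x => ∑ i, f' i x (Pi.single i 1))
      (Set.Icc (0 : Fin (n+1) → ℝ) 1) := by
    have : Continuous fun x => fderiv ℝ g x (Pi.single i₀ 1) :=
      ((ContinuousLinearMap.apply ℝ ℝ (Pi.single i₀ 1)).continuous).comp
        (hg.continuous_fderiv one_ne_zero)
    refine ((this.continuousOn).integrableOn_compact isCompact_Icc).congr_fun ?_ measurableSet_Icc
    intro x _
    exact (hdiv x).symm
  have hthm := MeasureTheory.integral_divergence_of_hasFDerivAt_off_countable'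
    (0 : Fin (n+1) → ℝ) 1 (by intro i; norm_num) f f' ∅ Set.countable_empty Hc Hd Hi
  have hL : ∫ x in Set.Icc (0 : Fin (n+1) → ℝ) 1, fderiv ℝ g x (Pi.single i₀ 1)
      = ∫ x in Set.Icc (0 : Fin (n+1) → ℝ) 1, ∑ i, f' i x (Pi.single i 1) := by
    refine setIntegral_congr_fun measurableSet_Icc fun x _ => (hdiv x).symm
  rw [hL, hthm]
  refine Finset.sum_eq_zero fun i _ => ?_
  by_cases h : i = i₀
  · subst h
    have hkey : ∀ x : Fin n → ℝ,
        f i (i.insertNth ((1 : Fin (n+1) → ℝ) i) x) = f i (i.insertNth ((0 : Fin (n+1) → ℝ) i) x) := by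
      intro x
      have hins : i.insertNth ((1:Fin (n+1) → ℝ) i) x
          = i.insertNth ((0:Fin (n+1) → ℝ) i) x
            + fun j => (((Pi.single i 1 : Fin (n+1) → ℤ) j : ℤ) : ℝ) := by
        funext j
        refine Fin.succAboveCases i ?_ ?_ j
        · simp
        · intro m
          simp [Fin.succAbove_ne i m, Pi.single_eq_of_ne (Fin.succAbove_ne i m)]
      simp only [hf]
      rw [hins, hper]
    rw [show (∫ x in Set.Icc ((0:Fin (n+1)→ℝ) ∘ i.succAbove) ((1:Fin (n+1)→ℝ) ∘ i.succAbove),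
          f i (i.insertNth ((1 : Fin (n+1) → ℝ) i) x))
        = ∫ x in Set.Icc ((0:Fin (n+1)→ℝ) ∘ i.succAbove) ((1:Fin (n+1)→ℝ) ∘ i.succAbove),
          f i (i.insertNth ((0 : Fin (n+1) → ℝ) i) x) from integral_congr_ae
            (Filter.Eventually.of_forall fun x => hkey x)]
    exact sub_self _
  · simp [hf, h]


noncomputable def Ffield {d : ℕ} (p Q : ℝ → ℝ) (ρ : ℝ → (Fin d → ℝ) → ℝ)
    (w : ℝ → (Fin d → ℝ) → Fin d → ℝ) (i : Fin d) : ℝ → (Fin d → ℝ) → ℝ :=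
  fun s y =>
    px (fun a b => Q (ρ a b)) i s y * Real.sqrt (ρ s y) * ((1/2) * ∑ j, (w s y j)^2)
      - (1/2) * ρ s y * (∑ j, (w s y j)^2) * w s y i
      + p (ρ s y) * Real.sqrt (ρ s y) * px (fun a b => Q (ρ a b)) i s y
      - p (ρ s y) * ρ s y * w s y i

set_option maxHeartbeats 2000000 in
/-- Energy balance for smooth periodic solutions of the symmetrized dissipative
Aw–Rascle system: for every `t ∈ [0,T]`,
`∫ (½ρ|w|² + E(ρ))(t) + ∫₀ᵗ∫ |∇(Q∘ρ)|² = ∫ (½ρ|w|² + E(ρ))(0) + ∫₀ᵗ∫ √ρ w·∇(Q∘ρ)`. -/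
theorem energy_balance_symmetrized
    (d : ℕ) (hd : 1 ≤ d) (T : ℝ) (hT : 0 < T)
    (p Q E : ℝ → ℝ)
    (hp : ContDiffOn ℝ (⊤ : ℕ∞) p (Set.Ioi 0)) (hQ : ContDiffOn ℝ (⊤ : ℕ∞) Q (Set.Ioi 0))
    (hEsm : ContDiffOn ℝ (⊤ : ℕ∞) E (Set.Ioi 0))
    (hQp : ∀ s > (0:ℝ), deriv Q s = Real.sqrt s * deriv p s)
    (hEp : ∀ s > (0:ℝ), deriv E s = p s)
    (ρ : ℝ → (Fin d → ℝ) → ℝ) (w : ℝ → (Fin d → ℝ) → Fin d → ℝ)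
    (hρ : ContDiff ℝ (⊤ : ℕ∞) fun q : ℝ × (Fin d → ℝ) => ρ q.1 q.2)
    (hw : ContDiff ℝ (⊤ : ℕ∞) fun q : ℝ × (Fin d → ℝ) => w q.1 q.2)
    (hρpos : ∀ t ∈ Set.Icc (0:ℝ) T, ∀ x, 0 < ρ t x)
    (hρper : ∀ (t : ℝ) (x : Fin d → ℝ) (k : Fin d → ℤ),
      ρ t (x + fun i => (k i : ℝ)) = ρ t x)
    (hwper : ∀ (t : ℝ) (x : Fin d → ℝ) (k : Fin d → ℤ),
      w t (x + fun i => (k i : ℝ)) = w t x)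
    (hcont : ∀ t ∈ Set.Ioo (0:ℝ) T, ∀ x,
      pt ρ t x + ∑ i, px (fun s y => ρ s y * w s y i) i t x
        - ∑ i, px (fun s y =>
            Real.sqrt (ρ s y) * px (fun a b => Q (ρ a b)) i s y) i t x = 0)
    (hmom : ∀ t ∈ Set.Ioo (0:ℝ) T, ∀ (x : Fin d → ℝ) (j : Fin d),
      pt (fun s y => ρ s y * w s y j) t x
        + ∑ i, px (fun s y => ρ s y * w s y i * w s y j) i t x
      = ∑ i, px (fun s y =>
          px (fun a b => Q (ρ a b)) i s y * Real.sqrt (ρ s y) * w s y j) i t x) :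
    ∀ t ∈ Set.Icc (0:ℝ) T,
      (∫ x in cell d, ((1/2) * ρ t x * ∑ j, (w t x j) ^ 2 + E (ρ t x)))
          + ∫ s in (0:ℝ)..t, ∫ x in cell d,
              ∑ i, (px (fun a b => Q (ρ a b)) i s x) ^ 2
        = (∫ x in cell d, ((1/2) * ρ 0 x * ∑ j, (w 0 x j) ^ 2 + E (ρ 0 x)))
          + ∫ s in (0:ℝ)..t, ∫ x in cell d,
              ∑ i, Real.sqrt (ρ s x) * w s x i * px (fun a b => Q (ρ a b)) i s x := by
  obtain ⟨n, rfl⟩ : ∃ n, d = n + 1 := ⟨d - 1, (Nat.succ_pred_eq_of_pos hd).symm⟩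
  -- basic smoothness library
  have hwj : ∀ j, ContDiff ℝ (⊤ : ℕ∞) (fun q : ℝ × (Fin (n+1) → ℝ) => w q.1 q.2 j) :=
    fun j => contDiff_pi.1 hw j
  have hρslx : ∀ τ, ContDiff ℝ (⊤ : ℕ∞) (fun y => ρ τ y) := fun τ =>
    hρ.comp (contDiff_prodMk_right τ)
  have hwslx : ∀ τ j, ContDiff ℝ (⊤ : ℕ∞) (fun y => w τ y j) := fun τ j =>
    (hwj j).comp (contDiff_prodMk_right τ)
  have dρx : ∀ τ (x : Fin (n+1) → ℝ), DifferentiableAt ℝ (ρ τ) x := fun τ x =>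
    (hρslx τ).differentiable (by simp) x
  have dwx : ∀ τ (x : Fin (n+1) → ℝ) j, DifferentiableAt ℝ (fun y => w τ y j) x :=
    fun τ x j => (hwslx τ j).differentiable (by simp) x
  have dρt : ∀ τ (x : Fin (n+1) → ℝ), DifferentiableAt ℝ (fun τ' => ρ τ' x) τ := fun τ x =>
    (hρ.comp (contDiff_prodMk_left x)).differentiable (by simp) τ
  have dwt : ∀ τ (x : Fin (n+1) → ℝ) j, DifferentiableAt ℝ (fun τ' => w τ' x j) τ :=
    fun τ x j => ((hwj j).comp (contDiff_prodMk_left x)).differentiable (by simp) τ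
  have hQslx : ∀ τ, (∀ y, 0 < ρ τ y) → ContDiff ℝ (⊤ : ℕ∞) (fun y => Q (ρ τ y)) := fun τ h =>
    contDiff_iff_contDiffAt.2 fun y =>
      (hQ.contDiffAt (Ioi_mem_nhds (h y))).comp y (hρslx τ).contDiffAt
  have hpslx : ∀ τ, (∀ y, 0 < ρ τ y) → ContDiff ℝ (⊤ : ℕ∞) (fun y => p (ρ τ y)) := fun τ h =>
    contDiff_iff_contDiffAt.2 fun y =>
      (hp.contDiffAt (Ioi_mem_nhds (h y))).comp y (hρslx τ).contDiffAt
  have hsqslx : ∀ τ, (∀ y, 0 < ρ τ y) → ContDiff ℝ (⊤ : ℕ∞) (fun y => Real.sqrt (ρ τ y)) :=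
    fun τ h => contDiff_iff_contDiffAt.2 fun y =>
      (Real.contDiffAt_sqrt (h y).ne').comp y (hρslx τ).contDiffAt
  have hqslx : ∀ τ, (∀ y, 0 < ρ τ y) → ∀ i,
      ContDiff ℝ 2 (fun y => px (fun a b => Q (ρ a b)) i τ y) := fun τ h i =>
    ((hQslx τ h).fderiv_right (by norm_cast)).clm_apply contDiff_const
  have dsx : ∀ τ, (∀ y, 0 < ρ τ y) → ∀ (x : Fin (n+1) → ℝ),
      DifferentiableAt ℝ (fun y => Real.sqrt (ρ τ y)) x := fun τ h x =>
    (hsqslx τ h).differentiable (by simp) x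
  have dpx2 : ∀ τ, (∀ y, 0 < ρ τ y) → ∀ (x : Fin (n+1) → ℝ),
      DifferentiableAt ℝ (fun y => p (ρ τ y)) x := fun τ h x =>
    (hpslx τ h).differentiable (by simp) x
  have dqx : ∀ τ, (∀ y, 0 < ρ τ y) → ∀ i (x : Fin (n+1) → ℝ),
      DifferentiableAt ℝ (fun y => px (fun a b => Q (ρ a b)) i τ y) x := fun τ h i x =>
    (hqslx τ h i).differentiable (by norm_num) x
  -- pointwise energy identity
  have PW : ∀ s ∈ Set.Ioo (0:ℝ) T, ∀ x,
      pt (fun τ y => (1/2) * ρ τ y * ∑ j, (w τ y j)^2 + E (ρ τ y)) s x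
        = (∑ i, px (Ffield p Q ρ w i) i s x)
          - (∑ i, (px (fun a b => Q (ρ a b)) i s x)^2)
          + ∑ i, Real.sqrt (ρ s x) * w s x i * px (fun a b => Q (ρ a b)) i s x := by
    intro s hs x
    have hsI : s ∈ Set.Icc (0:ℝ) T := Set.Ioo_subset_Icc_self hs
    have rpos : ∀ y, 0 < ρ s y := hρpos s hsI
    have dρx' := dρx s x
    have dWx : ∀ j, DifferentiableAt ℝ (fun y => w s y j) x := fun j => dwx s x j
    have dsqx := dsx s rpos x
    have dqx' : ∀ i, DifferentiableAt ℝ (fun y => px (fun a b => Q (ρ a b)) i s y) x :=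
      fun i => dqx s rpos i x
    have dpx' := dpx2 s rpos x
    -- continuity / momentum substitutions
    have hrt : pt ρ s x
        = (∑ i, px (fun τ y =>
              Real.sqrt (ρ τ y) * px (fun a b => Q (ρ a b)) i τ y) i s x)
          - ∑ i, px (fun τ y => ρ τ y * w τ y i) i s x := by
      have h := hcont s hs x; linarith
    have hmo : ∀ j, pt (fun τ y => ρ τ y * w τ y j) s x
        = (∑ i, px (fun τ y =>
              px (fun a b => Q (ρ a b)) i τ y * Real.sqrt (ρ τ y) * w τ y j) i s x)
          - ∑ i, px (fun τ y => ρ τ y * w τ y i * w τ y j) i s x := by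
      intro j; have h := hmom s hs x j; linarith
    -- spatial product rules
    have pxc : ∀ (c : ℝ) (i : Fin (n+1)), px (fun _ _ => c) i s x = 0 := by
      intro c i; simp [px]
    have e1 : ∀ i, px (fun τ y => ρ τ y * w τ y i) i s x
        = px ρ i s x * w s x i + ρ s x * px (fun τ y => w τ y i) i s x :=
      fun i => px_mul ρ (fun τ y => w τ y i) i s x dρx' (dWx i)
    have e2 : ∀ i, px (fun τ y =>
          Real.sqrt (ρ τ y) * px (fun a b => Q (ρ a b)) i τ y) i s x
        = px (fun τ y => Real.sqrt (ρ τ y)) i s x * px (fun a b => Q (ρ a b)) i s x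
          + Real.sqrt (ρ s x) * px (fun τ y => px (fun a b => Q (ρ a b)) i τ y) i s x :=
      fun i => px_mul (fun τ y => Real.sqrt (ρ τ y))
        (fun τ y => px (fun a b => Q (ρ a b)) i τ y) i s x dsqx (dqx' i)
    have e3 : ∀ i j, px (fun τ y => ρ τ y * w τ y i * w τ y j) i s x
        = px (fun τ y => ρ τ y * w τ y i) i s x * w s x j
          + (ρ s x * w s x i) * px (fun τ y => w τ y j) i s x :=
      fun i j => px_mul (fun τ y => ρ τ y * w τ y i) (fun τ y => w τ y j) i s x
        (dρx'.mul (dWx i)) (dWx j)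
    have e4 : ∀ i j, px (fun τ y =>
          px (fun a b => Q (ρ a b)) i τ y * Real.sqrt (ρ τ y) * w τ y j) i s x
        = px (fun τ y => px (fun a b => Q (ρ a b)) i τ y * Real.sqrt (ρ τ y)) i s x * w s x j
          + (px (fun a b => Q (ρ a b)) i s x * Real.sqrt (ρ s x))
              * px (fun τ y => w τ y j) i s x :=
      fun i j => px_mul
        (fun τ y => px (fun a b => Q (ρ a b)) i τ y * Real.sqrt (ρ τ y))
        (fun τ y => w τ y j) i s x ((dqx' i).mul dsqx) (dWx j)
    have e4b : ∀ i, px (fun τ y =>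
          px (fun a b => Q (ρ a b)) i τ y * Real.sqrt (ρ τ y)) i s x
        = px (fun τ y => px (fun a b => Q (ρ a b)) i τ y) i s x * Real.sqrt (ρ s x)
          + px (fun a b => Q (ρ a b)) i s x * px (fun τ y => Real.sqrt (ρ τ y)) i s x :=
      fun i => px_mul (fun τ y => px (fun a b => Q (ρ a b)) i τ y)
        (fun τ y => Real.sqrt (ρ τ y)) i s x (dqx' i) dsqx
    have hsq : ∀ i, px (fun τ y => Real.sqrt (ρ τ y)) i s x
        = 1 / (2 * Real.sqrt (ρ s x)) * px ρ i s x := by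
      intro i
      have hder : DifferentiableAt ℝ Real.sqrt (ρ s x) :=
        (Real.hasDerivAt_sqrt (rpos x).ne').differentiableAt
      have h := px_comp Real.sqrt ρ i s x hder dρx'
      have hd : deriv Real.sqrt (ρ s x) = 1 / (2 * Real.sqrt (ρ s x)) :=
        (Real.hasDerivAt_sqrt (rpos x).ne').deriv
      rw [h, hd]
    have hq5 : ∀ i, px (fun a b => Q (ρ a b)) i s x
        = Real.sqrt (ρ s x) * deriv p (ρ s x) * px ρ i s x := by
      intro i
      have hder : DifferentiableAt ℝ Q (ρ s x) :=
        (hQ.contDiffAt (Ioi_mem_nhds (rpos x))).differentiableAt (by simp)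
      have h := px_comp Q ρ i s x hder dρx'
      rw [hQp (ρ s x) (rpos x)] at h
      exact h
    have hp' : ∀ i, px (fun τ y => p (ρ τ y)) i s x
        = deriv p (ρ s x) * px ρ i s x := by
      intro i
      have hder : DifferentiableAt ℝ p (ρ s x) :=
        (hp.contDiffAt (Ioi_mem_nhds (rpos x))).differentiableAt (by simp)
      exact px_comp p ρ i s x hder dρx'
    have fS1 : ∀ i, px (fun τ y => ∑ j, (w τ y j)^2) i s x
        = 2 * ∑ j, (w s x j * px (fun τ y => w τ y j) i s x) := by
      intro i
      calc px (fun τ y => ∑ j, (w τ y j)^2) i s x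
          = ∑ j, px (fun τ y => (w τ y j)^2) i s x :=
            px_sum (fun j τ y => (w τ y j)^2) i s x (fun j => (dWx j).pow 2)
        _ = ∑ j, 2 * (w s x j * px (fun τ y => w τ y j) i s x) := by
            refine Finset.sum_congr rfl fun j _ => ?_
            have h := px_comp (fun z : ℝ => z^2) (fun τ y => w τ y j) i s x
              (differentiableAt_pow 2) (dWx j)
            have hd : deriv (fun z : ℝ => z^2) (w s x j) = 2 * w s x j := by
              simp [deriv_pow]
            rw [h, hd]; ring
        _ = 2 * ∑ j, (w s x j * px (fun τ y => w τ y j) i s x) := by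
            rw [Finset.mul_sum]
    have dSx : DifferentiableAt ℝ (fun y => ∑ j, (w s y j)^2) x :=
      DifferentiableAt.fun_sum fun j _ => (dWx j).pow 2
    have fS0 : ∀ i, px (fun τ y => (1/2) * ∑ j, (w τ y j)^2) i s x
        = px (fun _ _ => (1/2) : ℝ → (Fin (n+1) → ℝ) → ℝ) i s x * (∑ j, (w s x j)^2)
          + (1/2) * px (fun τ y => ∑ j, (w τ y j)^2) i s x :=
      fun i => px_mul (fun _ _ => (1/2)) (fun τ y => ∑ j, (w τ y j)^2) i s x
        (differentiableAt_const _) dSx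
    -- expansion of the flux field
    have fF : ∀ i, px (Ffield p Q ρ w i) i s x
        = px (fun τ y =>
            px (fun a b => Q (ρ a b)) i τ y * Real.sqrt (ρ τ y) * ((1/2) * ∑ j, (w τ y j)^2)
              - (1/2) * ρ τ y * (∑ j, (w τ y j)^2) * w τ y i
              + p (ρ τ y) * Real.sqrt (ρ τ y) * px (fun a b => Q (ρ a b)) i τ y) i s x
          - px (fun τ y => p (ρ τ y) * ρ τ y * w τ y i) i s x := by
      intro i
      exact px_sub
        (fun τ y =>
            px (fun a b => Q (ρ a b)) i τ y * Real.sqrt (ρ τ y) * ((1/2) * ∑ j, (w τ y j)^2)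
              - (1/2) * ρ τ y * (∑ j, (w τ y j)^2) * w τ y i
              + p (ρ τ y) * Real.sqrt (ρ τ y) * px (fun a b => Q (ρ a b)) i τ y)
        (fun τ y => p (ρ τ y) * ρ τ y * w τ y i) i s x
        (((((dqx' i).mul dsqx).mul ((differentiableAt_const _).mul dSx)).sub
          ((((differentiableAt_const _).mul dρx').mul dSx).mul (dWx i))).add
          (((dpx'.mul dsqx)).mul (dqx' i)))
        ((dpx'.mul dρx').mul (dWx i))
    have fA : ∀ i, px (fun τ y =>
            px (fun a b => Q (ρ a b)) i τ y * Real.sqrt (ρ τ y) * ((1/2) * ∑ j, (w τ y j)^2)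
              - (1/2) * ρ τ y * (∑ j, (w τ y j)^2) * w τ y i
              + p (ρ τ y) * Real.sqrt (ρ τ y) * px (fun a b => Q (ρ a b)) i τ y) i s x
        = px (fun τ y =>
            px (fun a b => Q (ρ a b)) i τ y * Real.sqrt (ρ τ y) * ((1/2) * ∑ j, (w τ y j)^2)
              - (1/2) * ρ τ y * (∑ j, (w τ y j)^2) * w τ y i) i s x
          + px (fun τ y =>
              p (ρ τ y) * Real.sqrt (ρ τ y) * px (fun a b => Q (ρ a b)) i τ y) i s x :=
      fun i => px_add _ _ i s x
        ((((dqx' i).mul dsqx).mul ((differentiableAt_const _).mul dSx)).sub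
          ((((differentiableAt_const _).mul dρx').mul dSx).mul (dWx i)))
        ((dpx'.mul dsqx).mul (dqx' i))
    have fB : ∀ i, px (fun τ y =>
            px (fun a b => Q (ρ a b)) i τ y * Real.sqrt (ρ τ y) * ((1/2) * ∑ j, (w τ y j)^2)
              - (1/2) * ρ τ y * (∑ j, (w τ y j)^2) * w τ y i) i s x
        = px (fun τ y =>
            px (fun a b => Q (ρ a b)) i τ y * Real.sqrt (ρ τ y)
              * ((1/2) * ∑ j, (w τ y j)^2)) i s x
          - px (fun τ y => (1/2) * ρ τ y * (∑ j, (w τ y j)^2) * w τ y i) i s x :=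
      fun i => px_sub _ _ i s x
        (((dqx' i).mul dsqx).mul ((differentiableAt_const _).mul dSx))
        ((((differentiableAt_const _).mul dρx').mul dSx).mul (dWx i))
    have fT1 : ∀ i, px (fun τ y =>
          px (fun a b => Q (ρ a b)) i τ y * Real.sqrt (ρ τ y)
            * ((1/2) * ∑ j, (w τ y j)^2)) i s x
        = px (fun τ y => px (fun a b => Q (ρ a b)) i τ y * Real.sqrt (ρ τ y)) i s x
            * ((1/2) * ∑ j, (w s x j)^2)
          + (px (fun a b => Q (ρ a b)) i s x * Real.sqrt (ρ s x))
              * px (fun τ y => (1/2) * ∑ j, (w τ y j)^2) i s x :=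
      fun i => px_mul _ _ i s x ((dqx' i).mul dsqx) ((differentiableAt_const _).mul dSx)
    have fT2 : ∀ i, px (fun τ y => (1/2) * ρ τ y * (∑ j, (w τ y j)^2) * w τ y i) i s x
        = px (fun τ y => (1/2) * ρ τ y * ∑ j, (w τ y j)^2) i s x * w s x i
          + ((1/2) * ρ s x * ∑ j, (w s x j)^2) * px (fun τ y => w τ y i) i s x :=
      fun i => px_mul (fun τ y => (1/2) * ρ τ y * ∑ j, (w τ y j)^2)
        (fun τ y => w τ y i) i s x
        ((((differentiableAt_const _).mul dρx')).mul dSx) (dWx i)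
    have fT2b : ∀ i, px (fun τ y => (1/2) * ρ τ y * ∑ j, (w τ y j)^2) i s x
        = px (fun τ y => (1/2) * ρ τ y) i s x * ∑ j, (w s x j)^2
          + ((1/2) * ρ s x) * px (fun τ y => ∑ j, (w τ y j)^2) i s x :=
      fun i => px_mul (fun τ y => (1/2) * ρ τ y) (fun τ y => ∑ j, (w τ y j)^2) i s x
        ((differentiableAt_const _).mul dρx') dSx
    have fT2c : ∀ i, px (fun τ y => (1/2) * ρ τ y) i s x
        = px (fun _ _ => (1/2) : ℝ → (Fin (n+1) → ℝ) → ℝ) i s x * ρ s x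
          + (1/2) * px ρ i s x :=
      fun i => px_mul (fun _ _ => (1/2)) ρ i s x (differentiableAt_const _) dρx'
    have fT3 : ∀ i, px (fun τ y =>
          p (ρ τ y) * Real.sqrt (ρ τ y) * px (fun a b => Q (ρ a b)) i τ y) i s x
        = px (fun τ y => p (ρ τ y) * Real.sqrt (ρ τ y)) i s x
              * px (fun a b => Q (ρ a b)) i s x
          + (p (ρ s x) * Real.sqrt (ρ s x))
              * px (fun τ y => px (fun a b => Q (ρ a b)) i τ y) i s x :=
      fun i => px_mul (fun τ y => p (ρ τ y) * Real.sqrt (ρ τ y))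
        (fun τ y => px (fun a b => Q (ρ a b)) i τ y) i s x (dpx'.mul dsqx) (dqx' i)
    have fT3b : ∀ i, px (fun τ y => p (ρ τ y) * Real.sqrt (ρ τ y)) i s x
        = px (fun τ y => p (ρ τ y)) i s x * Real.sqrt (ρ s x)
          + p (ρ s x) * px (fun τ y => Real.sqrt (ρ τ y)) i s x :=
      fun i => px_mul (fun τ y => p (ρ τ y)) (fun τ y => Real.sqrt (ρ τ y)) i s x dpx' dsqx
    have fT4 : ∀ i, px (fun τ y => p (ρ τ y) * ρ τ y * w τ y i) i s x
        = px (fun τ y => p (ρ τ y) * ρ τ y) i s x * w s x i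
          + (p (ρ s x) * ρ s x) * px (fun τ y => w τ y i) i s x :=
      fun i => px_mul (fun τ y => p (ρ τ y) * ρ τ y) (fun τ y => w τ y i) i s x
        (dpx'.mul dρx') (dWx i)
    have fT4b : ∀ i, px (fun τ y => p (ρ τ y) * ρ τ y) i s x
        = px (fun τ y => p (ρ τ y)) i s x * ρ s x + p (ρ s x) * px ρ i s x :=
      fun i => px_mul (fun τ y => p (ρ τ y)) ρ i s x dpx' dρx'
    -- time derivative expansion
    have dρt' := dρt s x
    have dWt : ∀ j, DifferentiableAt ℝ (fun τ' => w τ' x j) s := fun j => dwt s x j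
    have dSt : DifferentiableAt ℝ (fun τ' => ∑ j, (w τ' x j)^2) s :=
      DifferentiableAt.fun_sum fun j _ => (dWt j).pow 2
    have ptc : pt (fun _ _ => (1/2) : ℝ → (Fin (n+1) → ℝ) → ℝ) s x = 0 := by
      simp [pt]
    have tE : pt (fun τ y => (1/2) * ρ τ y * ∑ j, (w τ y j)^2 + E (ρ τ y)) s x
        = pt (fun τ y => (1/2) * ρ τ y * ∑ j, (w τ y j)^2) s x
          + pt (fun τ y => E (ρ τ y)) s x := by
      refine pt_add _ _ s x ?_ ?_
      · exact ((differentiableAt_const _).mul dρt').mul dSt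
      · exact DifferentiableAt.comp s
          ((hEsm.contDiffAt (Ioi_mem_nhds (rpos x))).differentiableAt (by simp)) dρt'
    have tE1 : pt (fun τ y => (1/2) * ρ τ y * ∑ j, (w τ y j)^2) s x
        = pt (fun τ y => (1/2) * ρ τ y) s x * ∑ j, (w s x j)^2
          + ((1/2) * ρ s x) * pt (fun τ y => ∑ j, (w τ y j)^2) s x :=
      pt_mul (fun τ y => (1/2) * ρ τ y) (fun τ y => ∑ j, (w τ y j)^2) s x
        ((differentiableAt_const _).mul dρt') dSt
    have tE2 : pt (fun τ y => (1/2) * ρ τ y) s x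
        = pt (fun _ _ => (1/2) : ℝ → (Fin (n+1) → ℝ) → ℝ) s x * ρ s x
          + (1/2) * pt ρ s x :=
      pt_mul (fun _ _ => (1/2)) ρ s x (differentiableAt_const _) dρt'
    have tE3 : pt (fun τ y => E (ρ τ y)) s x = p (ρ s x) * pt ρ s x := by
      have hder : DifferentiableAt ℝ E (ρ s x) :=
        (hEsm.contDiffAt (Ioi_mem_nhds (rpos x))).differentiableAt (by simp)
      have h := pt_comp E ρ s x hder dρt'
      rw [hEp (ρ s x) (rpos x)] at h
      exact h
    have tS1 : pt (fun τ y => ∑ j, (w τ y j)^2) s x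
        = 2 * ∑ j, (w s x j * pt (fun τ y => w τ y j) s x) := by
      calc pt (fun τ y => ∑ j, (w τ y j)^2) s x
          = ∑ j, pt (fun τ y => (w τ y j)^2) s x :=
            pt_sum (fun j τ y => (w τ y j)^2) s x (fun j => (dWt j).pow 2)
        _ = ∑ j, 2 * (w s x j * pt (fun τ y => w τ y j) s x) := by
            refine Finset.sum_congr rfl fun j _ => ?_
            have h := pt_comp (fun z : ℝ => z^2) (fun τ y => w τ y j) s x
              (differentiableAt_pow 2) (dWt j)
            have hd : deriv (fun z : ℝ => z^2) (w s x j) = 2 * w s x j := by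
              simp [deriv_pow]
            rw [h, hd]; ring
        _ = _ := by rw [Finset.mul_sum]
    have m1 : ∀ j, pt (fun τ y => ρ τ y * w τ y j) s x
        = pt ρ s x * w s x j + ρ s x * pt (fun τ y => w τ y j) s x :=
      fun j => pt_mul ρ (fun τ y => w τ y j) s x dρt' (dWt j)
    have hsum2 : ∑ j, w s x j * pt (fun τ y => ρ τ y * w τ y j) s x
        = pt ρ s x * (∑ j, (w s x j)^2)
          + ρ s x * ∑ j, (w s x j * pt (fun τ y => w τ y j) s x) := by
      calc ∑ j, w s x j * pt (fun τ y => ρ τ y * w τ y j) s x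
          = ∑ j, (pt ρ s x * (w s x j)^2
              + ρ s x * (w s x j * pt (fun τ y => w τ y j) s x)) :=
            Finset.sum_congr rfl fun j _ => by rw [m1 j]; ring
        _ = _ := by rw [Finset.sum_add_distrib, ← Finset.mul_sum, ← Finset.mul_sum]
    have tmain : pt (fun τ y => (1/2) * ρ τ y * ∑ j, (w τ y j)^2 + E (ρ τ y)) s x
        = (∑ j, w s x j * pt (fun τ y => ρ τ y * w τ y j) s x)
          + (p (ρ s x) - (1/2) * ∑ j, (w s x j)^2) * pt ρ s x := by
      rw [tE, tE1, tE2, tE3, tS1, hsum2, ptc]; ring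
    -- per-index key identity
    have hsum1 : ∀ i, ∑ j, (w s x j * px (fun τ y =>
            px (fun a b => Q (ρ a b)) i τ y * Real.sqrt (ρ τ y) * w τ y j) i s x
          - w s x j * px (fun τ y => ρ τ y * w τ y i * w τ y j) i s x)
        = (px (fun τ y => px (fun a b => Q (ρ a b)) i τ y * Real.sqrt (ρ τ y)) i s x
            - px (fun τ y => ρ τ y * w τ y i) i s x) * (∑ j, (w s x j)^2)
          + (px (fun a b => Q (ρ a b)) i s x * Real.sqrt (ρ s x) - ρ s x * w s x i)
              * ∑ j, (w s x j * px (fun τ y => w τ y j) i s x) := by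
      intro i
      calc ∑ j, (w s x j * px (fun τ y =>
            px (fun a b => Q (ρ a b)) i τ y * Real.sqrt (ρ τ y) * w τ y j) i s x
          - w s x j * px (fun τ y => ρ τ y * w τ y i * w τ y j) i s x)
          = ∑ j, ((px (fun τ y =>
                px (fun a b => Q (ρ a b)) i τ y * Real.sqrt (ρ τ y)) i s x
              - px (fun τ y => ρ τ y * w τ y i) i s x) * (w s x j)^2
            + (px (fun a b => Q (ρ a b)) i s x * Real.sqrt (ρ s x) - ρ s x * w s x i)
                * (w s x j * px (fun τ y => w τ y j) i s x)) :=
            Finset.sum_congr rfl fun j _ => by rw [e4 i j, e3 i j]; ring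
        _ = _ := by rw [Finset.sum_add_distrib, ← Finset.mul_sum, ← Finset.mul_sum]
    have keyi : ∀ i, (∑ j, (w s x j * px (fun τ y =>
            px (fun a b => Q (ρ a b)) i τ y * Real.sqrt (ρ τ y) * w τ y j) i s x
          - w s x j * px (fun τ y => ρ τ y * w τ y i * w τ y j) i s x))
        + (p (ρ s x) - (1/2) * ∑ j, (w s x j)^2)
            * (px (fun τ y =>
                Real.sqrt (ρ τ y) * px (fun a b => Q (ρ a b)) i τ y) i s x
              - px (fun τ y => ρ τ y * w τ y i) i s x)
        = px (Ffield p Q ρ w i) i s x - (px (fun a b => Q (ρ a b)) i s x)^2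
          + Real.sqrt (ρ s x) * w s x i * px (fun a b => Q (ρ a b)) i s x := by
      intro i
      rw [hsum1 i, fF i, fA i, fB i, fT1 i, fT2 i, fT2b i, fT2c i, fT3 i, fT3b i,
        fT4 i, fT4b i, fS0 i, fS1 i, e4b i, e1 i, e2 i, hp' i, hsq i, hq5 i]
      simp only [pxc]
      have hSRne : Real.sqrt (ρ s x) ≠ 0 :=
        ne_of_gt (Real.sqrt_pos.2 (rpos x))
      have hroot : Real.sqrt (ρ s x) ^ 2 = ρ s x := Real.sq_sqrt (rpos x).le
      field_simp
      linear_combination (-(4:ℝ) * deriv p (ρ s x)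
        * px ρ i s x * w s x i) * hroot
    -- assemble
    rw [tmain, hrt]
    have hsum3 : ∑ j, w s x j * pt (fun τ y => ρ τ y * w τ y j) s x
        = ∑ i, ∑ j, (w s x j * px (fun τ y =>
              px (fun a b => Q (ρ a b)) i τ y * Real.sqrt (ρ τ y) * w τ y j) i s x
            - w s x j * px (fun τ y => ρ τ y * w τ y i * w τ y j) i s x) := by
      calc ∑ j, w s x j * pt (fun τ y => ρ τ y * w τ y j) s x
          = ∑ j, ∑ i, (w s x j * px (fun τ y =>
                px (fun a b => Q (ρ a b)) i τ y * Real.sqrt (ρ τ y) * w τ y j) i s x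
              - w s x j * px (fun τ y => ρ τ y * w τ y i * w τ y j) i s x) := by
            refine Finset.sum_congr rfl fun j _ => ?_
            rw [hmo j, mul_sub, Finset.mul_sum, Finset.mul_sum, ← Finset.sum_sub_distrib]
        _ = _ := Finset.sum_comm
    rw [hsum3]
    rw [show (p (ρ s x) - (1/2) * ∑ j, (w s x j)^2)
          * ((∑ i, px (fun τ y =>
              Real.sqrt (ρ τ y) * px (fun a b => Q (ρ a b)) i τ y) i s x)
            - ∑ i, px (fun τ y => ρ τ y * w τ y i) i s x)
        = ∑ i, ((p (ρ s x) - (1/2) * ∑ j, (w s x j)^2)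
            * (px (fun τ y =>
                Real.sqrt (ρ τ y) * px (fun a b => Q (ρ a b)) i τ y) i s x
              - px (fun τ y => ρ τ y * w τ y i) i s x))
      from by rw [← Finset.sum_sub_distrib, Finset.mul_sum]]
    rw [← Finset.sum_add_distrib]
    rw [show (∑ i, px (Ffield p Q ρ w i) i s x)
          - (∑ i, (px (fun a b => Q (ρ a b)) i s x)^2)
          + ∑ i, Real.sqrt (ρ s x) * w s x i * px (fun a b => Q (ρ a b)) i s x
        = ∑ i, (px (Ffield p Q ρ w i) i s x - (px (fun a b => Q (ρ a b)) i s x)^2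
            + Real.sqrt (ρ s x) * w s x i * px (fun a b => Q (ρ a b)) i s x)
      from by rw [← Finset.sum_sub_distrib, ← Finset.sum_add_distrib]]
    exact Finset.sum_congr rfl fun i _ => keyi i
  intro t ht
  -- joint smoothness of the energy density and of Q∘ρ
  have hUopen : IsOpen {q : ℝ × (Fin (n+1) → ℝ) | 0 < ρ q.1 q.2} :=
    isOpen_lt continuous_const hρ.continuous
  have hejAt : ∀ (τ : ℝ) (x : Fin (n+1) → ℝ), 0 < ρ τ x →
      ContDiffAt ℝ (⊤ : ℕ∞) (fun q : ℝ × (Fin (n+1) → ℝ) =>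
        (1/2) * ρ q.1 q.2 * ∑ j, (w q.1 q.2 j)^2 + E (ρ q.1 q.2)) (τ, x) := by
    intro τ x h
    refine ContDiffAt.add ?_ ?_
    · exact (contDiffAt_const.mul hρ.contDiffAt).mul
        (ContDiffAt.sum fun j _ => ((hwj j).contDiffAt).pow 2)
    · exact (hEsm.contDiffAt (Ioi_mem_nhds h)).comp (τ, x) hρ.contDiffAt
  have hejU : ContDiffOn ℝ (⊤ : ℕ∞) (fun q : ℝ × (Fin (n+1) → ℝ) =>
      (1/2) * ρ q.1 q.2 * ∑ j, (w q.1 q.2 j)^2 + E (ρ q.1 q.2))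
      {q : ℝ × (Fin (n+1) → ℝ) | 0 < ρ q.1 q.2} :=
    fun q hq => (hejAt q.1 q.2 hq).contDiffWithinAt
  have hejD : ContinuousOn (fderiv ℝ (fun q : ℝ × (Fin (n+1) → ℝ) =>
      (1/2) * ρ q.1 q.2 * ∑ j, (w q.1 q.2 j)^2 + E (ρ q.1 q.2)))
      {q : ℝ × (Fin (n+1) → ℝ) | 0 < ρ q.1 q.2} :=
    hejU.continuousOn_fderiv_of_isOpen hUopen (by simp)
  have pte_eq : ∀ (τ : ℝ) (x : Fin (n+1) → ℝ), 0 < ρ τ x →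
      pt (fun τ' y => (1/2) * ρ τ' y * ∑ j, (w τ' y j)^2 + E (ρ τ' y)) τ x
        = fderiv ℝ (fun q : ℝ × (Fin (n+1) → ℝ) =>
            (1/2) * ρ q.1 q.2 * ∑ j, (w q.1 q.2 j)^2 + E (ρ q.1 q.2)) (τ, x) (1, 0) :=
    fun τ x h => pt_eq_joint _ τ x ((hejAt τ x h).differentiableAt (by simp))
  have hQjAt : ∀ (τ : ℝ) (x : Fin (n+1) → ℝ), 0 < ρ τ x →
      ContDiffAt ℝ (⊤ : ℕ∞) (fun q : ℝ × (Fin (n+1) → ℝ) => Q (ρ q.1 q.2)) (τ, x) :=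
    fun τ x h => (hQ.contDiffAt (Ioi_mem_nhds h)).comp (τ, x) hρ.contDiffAt
  have hQjU : ContDiffOn ℝ (⊤ : ℕ∞) (fun q : ℝ × (Fin (n+1) → ℝ) => Q (ρ q.1 q.2))
      {q : ℝ × (Fin (n+1) → ℝ) | 0 < ρ q.1 q.2} :=
    fun q hq => (hQjAt q.1 q.2 hq).contDiffWithinAt
  have hQjD : ContinuousOn (fderiv ℝ (fun q : ℝ × (Fin (n+1) → ℝ) => Q (ρ q.1 q.2)))
      {q : ℝ × (Fin (n+1) → ℝ) | 0 < ρ q.1 q.2} :=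
    hQjU.continuousOn_fderiv_of_isOpen hUopen (by simp)
  have q_eq : ∀ (i : Fin (n+1)) (τ : ℝ) (x : Fin (n+1) → ℝ), 0 < ρ τ x →
      px (fun a b => Q (ρ a b)) i τ x
        = fderiv ℝ (fun q : ℝ × (Fin (n+1) → ℝ) => Q (ρ q.1 q.2)) (τ, x)
            (0, Pi.single i 1) :=
    fun i τ x h => px_eq_joint _ i τ x ((hQjAt τ x h).differentiableAt (by simp))
  have hqcontU : ∀ i : Fin (n+1),
      ContinuousOn (fun q : ℝ × (Fin (n+1) → ℝ) => px (fun a b => Q (ρ a b)) i q.1 q.2)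
        {q : ℝ × (Fin (n+1) → ℝ) | 0 < ρ q.1 q.2} := by
    intro i
    have h1 : ContinuousOn (fun q : ℝ × (Fin (n+1) → ℝ) =>
        fderiv ℝ (fun q : ℝ × (Fin (n+1) → ℝ) => Q (ρ q.1 q.2)) q
          ((0 : ℝ × (Fin (n+1) → ℝ)).1, Pi.single i 1))
        {q : ℝ × (Fin (n+1) → ℝ) | 0 < ρ q.1 q.2} := by
      exact (ContinuousLinearMap.apply ℝ ℝ
        (((0 : ℝ × (Fin (n+1) → ℝ)).1, Pi.single i 1) : ℝ × (Fin (n+1) → ℝ))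
        ).continuous.comp_continuousOn hQjD
    refine h1.congr fun q hq => ?_
    exact q_eq i q.1 q.2 hq
  -- generic continuity of parametrized cell integrals
  have key_cont : ∀ G : ℝ × (Fin (n+1) → ℝ) → ℝ,
      ContinuousOn G {q : ℝ × (Fin (n+1) → ℝ) | 0 < ρ q.1 q.2} →
      ContinuousOn (fun τ => ∫ x in cell (n+1), G (τ, x)) (Set.Icc 0 T) := by
    intro G hG
    have hK : IsCompact ((Set.Icc (0:ℝ) T) ×ˢ (Set.Icc (0:Fin (n+1) → ℝ) 1)) :=
      isCompact_Icc.prod isCompact_Icc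
    have hKU : ((Set.Icc (0:ℝ) T) ×ˢ (Set.Icc (0:Fin (n+1) → ℝ) 1))
        ⊆ {q : ℝ × (Fin (n+1) → ℝ) | 0 < ρ q.1 q.2} := fun q hq => hρpos q.1 hq.1 q.2
    obtain ⟨C, hC⟩ := hK.exists_bound_of_continuousOn (hG.mono hKU)
    refine continuousOn_of_dominated (bound := fun _ => C) ?_ ?_ ?_ ?_
    · intro τ hτ
      exact (hG.comp_continuous (continuous_const.prodMk continuous_id)
        (fun x => hρpos τ hτ x)).aestronglyMeasurable
    · intro τ hτ
      refine (ae_restrict_iff' measurableSet_cell).2 (Filter.Eventually.of_forall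
        fun x hx => ?_)
      exact hC (τ, x) ⟨hτ, cell_subset_Icc hx⟩
    · refine integrableOn_const ?_
      exact (lt_of_le_of_lt (measure_mono cell_subset_Icc) isCompact_Icc.measure_lt_top).ne
    · refine Filter.Eventually.of_forall fun x => ?_
      exact hG.comp ((continuous_id.prodMk continuous_const).continuousOn)
        (fun τ' hτ' => hρpos τ' hτ' x)
  have hφcont : ContinuousOn (fun τ => ∫ x in cell (n+1),
      ((1/2) * ρ τ x * ∑ j, (w τ x j)^2 + E (ρ τ x))) (Set.Icc 0 T) :=
    key_cont _ hejU.continuousOn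
  have hg1cont : ContinuousOn (fun τ => ∫ x in cell (n+1),
      ∑ i, (px (fun a b => Q (ρ a b)) i τ x)^2) (Set.Icc 0 T) :=
    key_cont (fun q => ∑ i, (px (fun a b => Q (ρ a b)) i q.1 q.2)^2)
      (continuousOn_finset_sum _ fun i _ => (hqcontU i).pow 2)
  have hg2cont : ContinuousOn (fun τ => ∫ x in cell (n+1),
      ∑ i, Real.sqrt (ρ τ x) * w τ x i * px (fun a b => Q (ρ a b)) i τ x)
      (Set.Icc 0 T) := by
    refine key_cont (fun q => ∑ i, Real.sqrt (ρ q.1 q.2) * w q.1 q.2 i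
      * px (fun a b => Q (ρ a b)) i q.1 q.2)
      (continuousOn_finset_sum _ fun i _ => ?_)
    exact (((Real.continuous_sqrt.comp hρ.continuous).continuousOn).mul
      ((hwj i).continuous.continuousOn)).mul (hqcontU i)
  -- smoothness and periodicity of the flux field slices
  have hFslice : ∀ τ, (∀ y, 0 < ρ τ y) → ∀ i,
      ContDiff ℝ 1 (fun y => Ffield p Q ρ w i τ y) := by
    intro τ h i
    have h1 : ContDiff ℝ 1 (fun y => px (fun a b => Q (ρ a b)) i τ y) :=
      (hqslx τ h i).of_le one_le_two
    have h2 : ContDiff ℝ 1 (fun y => Real.sqrt (ρ τ y)) := (hsqslx τ h).of_le (by simp)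
    have h3 : ContDiff ℝ 1 (fun y => p (ρ τ y)) := (hpslx τ h).of_le (by simp)
    have h4 : ContDiff ℝ 1 (fun y => ρ τ y) := (hρslx τ).of_le (by simp)
    have h5 : ContDiff ℝ 1 (fun y : Fin (n+1) → ℝ => ∑ j, (w τ y j)^2) :=
      ContDiff.sum fun j _ => ((hwslx τ j).of_le (by simp)).pow 2
    have h6 : ∀ j, ContDiff ℝ 1 (fun y => w τ y j) := fun j => (hwslx τ j).of_le (by simp)
    exact ((((h1.mul h2).mul (contDiff_const.mul h5)).sub
      (((contDiff_const.mul h4).mul h5).mul (h6 i))).add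
      ((h3.mul h2).mul h1)).sub ((h3.mul h4).mul (h6 i))
  have perq : ∀ τ, (∀ y, 0 < ρ τ y) → ∀ (i : Fin (n+1)) (y : Fin (n+1) → ℝ)
      (k : Fin (n+1) → ℤ),
      px (fun a b => Q (ρ a b)) i τ (y + fun t => (k t : ℝ))
        = px (fun a b => Q (ρ a b)) i τ y := by
    intro τ h i y k
    have hshift := fderiv_shift (fun b => Q (ρ τ b)) (fun t => (k t : ℝ)) y
      (fun y' => congrArg Q (hρper τ y' k)) ((hQslx τ h).differentiable (by simp) _)
    show fderiv ℝ (fun b => Q (ρ τ b)) (y + fun t => (k t : ℝ)) (Pi.single i 1)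
      = fderiv ℝ (fun b => Q (ρ τ b)) y (Pi.single i 1)
    rw [← hshift]
  have perF : ∀ τ, (∀ y, 0 < ρ τ y) → ∀ (i : Fin (n+1)) (y : Fin (n+1) → ℝ)
      (k : Fin (n+1) → ℤ),
      Ffield p Q ρ w i τ (y + fun t => (k t : ℝ)) = Ffield p Q ρ w i τ y := by
    intro τ h i y k
    simp only [Ffield]
    rw [hρper τ y k, hwper τ y k, perq τ h i y k]
  have cont_px : ∀ (g : (Fin (n+1) → ℝ) → ℝ), ContDiff ℝ 1 g → ∀ i : Fin (n+1),
      Continuous fun x => fderiv ℝ g x (Pi.single i 1) := fun g hg i =>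
    (ContinuousLinearMap.apply ℝ ℝ (Pi.single i 1)).continuous.comp
      (hg.continuous_fderiv one_ne_zero)
  -- the derivative of the energy integral
  have hDer : ∀ s ∈ Set.Ioo (0:ℝ) T,
      HasDerivAt (fun τ => ∫ x in cell (n+1),
          ((1/2) * ρ τ x * ∑ j, (w τ x j)^2 + E (ρ τ x)))
        ((∫ x in cell (n+1),
            ∑ i, Real.sqrt (ρ s x) * w s x i * px (fun a b => Q (ρ a b)) i s x)
          - ∫ x in cell (n+1), ∑ i, (px (fun a b => Q (ρ a b)) i s x)^2) s := by
    intro s hs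
    have hsI : s ∈ Set.Icc (0:ℝ) T := Set.Ioo_subset_Icc_self hs
    have rpos : ∀ y, 0 < ρ s y := hρpos s hsI
    set ε := min s (T - s) with hε
    have hεpos : 0 < ε := lt_min hs.1 (sub_pos.2 hs.2)
    have hballIoo : Metric.ball s ε ⊆ Set.Ioo 0 T := by
      intro τ hτ; rw [Real.ball_eq_Ioo] at hτ
      have h1 := min_le_left s (T - s); have h2 := min_le_right s (T - s)
      exact ⟨by linarith [hτ.1], by linarith [hτ.2]⟩
    have hballIcc : Metric.ball s ε ⊆ Set.Icc 0 T :=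
      fun τ hτ => Set.Ioo_subset_Icc_self (hballIoo hτ)
    have hK1 : IsCompact ((Set.Icc (s-ε) (s+ε)) ×ˢ (Set.Icc (0:Fin (n+1) → ℝ) 1)) :=
      isCompact_Icc.prod isCompact_Icc
    have hK1U : ((Set.Icc (s-ε) (s+ε)) ×ˢ (Set.Icc (0:Fin (n+1) → ℝ) 1))
        ⊆ {q : ℝ × (Fin (n+1) → ℝ) | 0 < ρ q.1 q.2} := by
      intro q hq
      have h1 := min_le_left s (T - s); have h2 := min_le_right s (T - s)
      refine hρpos q.1 ⟨?_, ?_⟩ q.2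
      · have := hq.1.1; linarith
      · have := hq.1.2; linarith
    have hcontD : ContinuousOn (fun q : ℝ × (Fin (n+1) → ℝ) =>
        fderiv ℝ (fun q : ℝ × (Fin (n+1) → ℝ) =>
          (1/2) * ρ q.1 q.2 * ∑ j, (w q.1 q.2 j)^2 + E (ρ q.1 q.2)) q
          ((1 : ℝ), (0 : Fin (n+1) → ℝ)))
        {q : ℝ × (Fin (n+1) → ℝ) | 0 < ρ q.1 q.2} :=
      (ContinuousLinearMap.apply ℝ ℝ (((1 : ℝ), (0 : Fin (n+1) → ℝ)) :
        ℝ × (Fin (n+1) → ℝ))).continuous.comp_continuousOn hejD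
    obtain ⟨C, hC⟩ := hK1.exists_bound_of_continuousOn (hcontD.mono hK1U)
    have key := hasDerivAt_integral_of_dominated_loc_of_deriv_le
      (μ := volume.restrict (cell (n+1)))
      (F := fun τ x => (1/2) * ρ τ x * ∑ j, (w τ x j)^2 + E (ρ τ x))
      (F' := fun τ x => pt (fun τ' y =>
        (1/2) * ρ τ' y * ∑ j, (w τ' y j)^2 + E (ρ τ' y)) τ x)
      (bound := fun _ => C) (Metric.ball_mem_nhds s hεpos)
      (Filter.eventually_of_mem (Metric.ball_mem_nhds s hεpos) fun τ hτ =>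
        ((hejU.continuousOn.comp_continuous
          (continuous_const.prodMk continuous_id)
          (fun x => hρpos τ (hballIcc hτ) x)).aestronglyMeasurable))
      (integrableOn_cell_of_continuous
        (hejU.continuousOn.comp_continuous (continuous_const.prodMk continuous_id)
          (fun x => rpos x)))
      (((hcontD.comp_continuous (continuous_const.prodMk continuous_id)
          (fun x => rpos x)).congr
        (fun x => (pte_eq s x (rpos x)).symm)).aestronglyMeasurable)
      ((ae_restrict_iff' measurableSet_cell).2 (Filter.Eventually.of_forall
        fun x hx τ hτ => by
          show ‖pt (fun τ' y =>
            (1/2) * ρ τ' y * ∑ j, (w τ' y j)^2 + E (ρ τ' y)) τ x‖ ≤ C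
          rw [pte_eq τ x (hρpos τ (hballIcc hτ) x)]
          refine hC ((τ, x)) ⟨?_, cell_subset_Icc hx⟩
          rw [Real.ball_eq_Ioo] at hτ
          exact ⟨le_of_lt hτ.1, le_of_lt hτ.2⟩))
      (integrableOn_const
        (lt_of_le_of_lt (measure_mono cell_subset_Icc) isCompact_Icc.measure_lt_top).ne)
      (Filter.Eventually.of_forall fun x τ hτ => by exact
        (((hejAt τ x (hρpos τ (hballIcc hτ) x)).comp τ
          (contDiff_prodMk_left x).contDiffAt).differentiableAt (by simp)).hasDerivAt)
    obtain ⟨-, hder⟩ := key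
    -- value of the derivative
    have hint1 : IntegrableOn (fun x => ∑ i, px (Ffield p Q ρ w i) i s x)
        (cell (n+1)) :=
      integrableOn_cell_of_continuous (continuous_finset_sum _ fun i _ =>
        cont_px _ (hFslice s rpos i) i)
    have hint2 : IntegrableOn (fun x => ∑ i, (px (fun a b => Q (ρ a b)) i s x)^2)
        (cell (n+1)) :=
      integrableOn_cell_of_continuous (continuous_finset_sum _ fun i _ =>
        (cont_px (fun y => Q (ρ s y)) ((hQslx s rpos).of_le (by simp)) i).pow 2)
    have hint3 : IntegrableOn (fun x =>
        ∑ i, Real.sqrt (ρ s x) * w s x i * px (fun a b => Q (ρ a b)) i s x)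
        (cell (n+1)) := by
      refine integrableOn_cell_of_continuous (continuous_finset_sum _ fun i _ => ?_)
      exact ((Real.continuous_sqrt.comp ((hρslx s).continuous)).mul
        (hwslx s i).continuous).mul (cont_px (fun y => Q (ρ s y))
          ((hQslx s rpos).of_le (by simp)) i)
    have hinti : ∀ i, IntegrableOn (fun x => px (Ffield p Q ρ w i) i s x)
        (cell (n+1)) := fun i => integrableOn_cell_of_continuous
        (cont_px _ (hFslice s rpos i) i)
    have hzero : (∫ x in cell (n+1), ∑ i, px (Ffield p Q ρ w i) i s x) = 0 := by
      rw [integral_finset_sum _ (fun i _ => hinti i)]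
      refine Finset.sum_eq_zero fun i _ => ?_
      exact integral_px_zero (fun y => Ffield p Q ρ w i s y) (hFslice s rpos i)
        (fun y k => perF s rpos i y k) i
    have hval : (∫ x in cell (n+1), pt (fun τ' y =>
          (1/2) * ρ τ' y * ∑ j, (w τ' y j)^2 + E (ρ τ' y)) s x)
        = (∫ x in cell (n+1),
            ∑ i, Real.sqrt (ρ s x) * w s x i * px (fun a b => Q (ρ a b)) i s x)
          - ∫ x in cell (n+1), ∑ i, (px (fun a b => Q (ρ a b)) i s x)^2 := by
      have hint12 : IntegrableOn (fun x =>
          (∑ i, px (Ffield p Q ρ w i) i s x)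
            - ∑ i, (px (fun a b => Q (ρ a b)) i s x)^2) (cell (n+1)) :=
        hint1.sub hint2
      rw [setIntegral_congr_fun measurableSet_cell (fun x _ => PW s hs x)]
      rw [integral_add hint12 hint3, integral_sub hint1 hint2, hzero]
      ring
    have hder' : HasDerivAt (fun τ => ∫ x in cell (n+1),
        ((1/2) * ρ τ x * ∑ j, (w τ x j)^2 + E (ρ τ x)))
        (∫ x in cell (n+1), pt (fun τ' y =>
          (1/2) * ρ τ' y * ∑ j, (w τ' y j)^2 + E (ρ τ' y)) s x) s := hder
    rw [hval] at hder'
    exact hder'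
  -- fundamental theorem of calculus
  have h0t : (0:ℝ) ≤ t := ht.1
  have hsubT : Set.Icc (0:ℝ) t ⊆ Set.Icc (0:ℝ) T := Set.Icc_subset_Icc le_rfl ht.2
  have hg1ii : IntervalIntegrable (fun τ => ∫ x in cell (n+1),
      ∑ i, (px (fun a b => Q (ρ a b)) i τ x)^2) volume 0 t := by
    refine ContinuousOn.intervalIntegrable ?_
    rw [Set.uIcc_of_le h0t]
    exact hg1cont.mono hsubT
  have hg2ii : IntervalIntegrable (fun τ => ∫ x in cell (n+1),
      ∑ i, Real.sqrt (ρ τ x) * w τ x i * px (fun a b => Q (ρ a b)) i τ x)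
      volume 0 t := by
    refine ContinuousOn.intervalIntegrable ?_
    rw [Set.uIcc_of_le h0t]
    exact hg2cont.mono hsubT
  have hFTC : ∫ s in (0:ℝ)..t,
        ((∫ x in cell (n+1),
            ∑ i, Real.sqrt (ρ s x) * w s x i * px (fun a b => Q (ρ a b)) i s x)
          - ∫ x in cell (n+1), ∑ i, (px (fun a b => Q (ρ a b)) i s x)^2)
      = (∫ x in cell (n+1), ((1/2) * ρ t x * ∑ j, (w t x j)^2 + E (ρ t x)))
        - ∫ x in cell (n+1), ((1/2) * ρ 0 x * ∑ j, (w 0 x j)^2 + E (ρ 0 x)) := by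
    refine intervalIntegral.integral_eq_sub_of_hasDeriv_right_of_le h0t
      (hφcont.mono hsubT) (fun τ hτ =>
        (hDer τ ⟨hτ.1, lt_of_lt_of_le hτ.2 ht.2⟩).hasDerivWithinAt)
      (hg2ii.sub hg1ii)
  have hsplit : ∫ s in (0:ℝ)..t,
        ((∫ x in cell (n+1),
            ∑ i, Real.sqrt (ρ s x) * w s x i * px (fun a b => Q (ρ a b)) i s x)
          - ∫ x in cell (n+1), ∑ i, (px (fun a b => Q (ρ a b)) i s x)^2)
      = (∫ s in (0:ℝ)..t, ∫ x in cell (n+1),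
            ∑ i, Real.sqrt (ρ s x) * w s x i * px (fun a b => Q (ρ a b)) i s x)
        - ∫ s in (0:ℝ)..t, ∫ x in cell (n+1),
            ∑ i, (px (fun a b => Q (ρ a b)) i s x)^2 :=
    intervalIntegral.integral_sub hg2ii hg1ii
  linarith [hFTC, hsplit]
end
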